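/- arXiv:2211.15137 — 5 statements merged into one kernel-verified Lean document; each statement's English description precedes it below -/
import Mathlib

section
/- Let K be an imaginary quadratic field, let h be a positive integer, let m be a nonnegative integer with 2m < h, let c_0, c_1, ..., c_m be elements of the ring of integers O_K with c_0 ≠ 0, and let α ∈ O_K satisfy N_{K/ℚ}(α) ≥ 2. For each natural number k, define γ_k = c_m + c_{m-1}·α^k + c_{m-2}·α^{2k} + ... + c_0·α^{mk}, π_k = 1 + α^{(h-m)k}·γ_k, and F_k = N_{K/ℚ}(π_k). Then for all sufficiently large k one has F_k > 16·N_{K/ℚ}(γ_k)^2. -/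
set_option maxHeartbeats 1000000


open NumberField

/-- Let `K` be an imaginary quadratic field, `h` a positive integer, `m` a nonnegative
integer with `2m < h`, `c 0, …, c m ∈ 𝓞 K` with `c 0 ≠ 0`, and `α ∈ 𝓞 K` with
`N(α) ≥ 2`.  Put `γ k = c m + c (m-1)·α^k + ⋯ + c 0·α^{mk}`,
`π k = 1 + α^{(h-m)k}·γ k` and `F k = N(π k)`.  Then `F k > 16·N(γ k)²` for all
sufficiently large `k`. -/
theorem stmt_0 (K : Type) [Field K] [NumberField K]
    (hdeg : Module.finrank ℚ K = 2) (himag : IsEmpty (K →+* ℝ))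
    (h m : ℕ) (hh : 0 < h) (hm : 2 * m < h)
    (c : ℕ → 𝓞 K) (hc0 : c 0 ≠ 0)
    (α : 𝓞 K) (hα : 2 ≤ Algebra.norm ℚ (α : K))
    (γ π : ℕ → 𝓞 K) (F : ℕ → ℚ)
    (hγ : ∀ k, γ k = ∑ i ∈ Finset.range (m + 1), c (m - i) * α ^ (i * k))
    (hπ : ∀ k, π k = 1 + α ^ ((h - m) * k) * γ k)
    (hF : ∀ k, F k = Algebra.norm ℚ ((π k : K))) :
    ∃ N : ℕ, ∀ k ≥ N, F k > 16 * (Algebra.norm ℚ ((γ k : K))) ^ 2 := by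
  classical
  have hcard : Fintype.card (K →ₐ[ℚ] ℂ) = 2 := by
    rw [AlgHom.card, hdeg]
  obtain ⟨σ⟩ : Nonempty (K →ₐ[ℚ] ℂ) := Fintype.card_pos_iff.mp (by omega)
  set σ' : K →ₐ[ℚ] ℂ := ((starRingEnd ℂ).comp (σ : K →+* ℂ)).toRatAlgHom with hσ'def
  have hσ' : ∀ x, σ' x = starRingEnd ℂ (σ x) := fun x => rfl
  have hne : σ ≠ σ' := by
    intro hEq
    have hreal : ∀ x : K, (σ x).im = 0 := by
      intro x
      have h1 : σ x = starRingEnd ℂ (σ x) :=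
        (DFunLike.congr_fun hEq x).trans (hσ' x)
      have h2 := congrArg Complex.im h1
      rw [Complex.conj_im] at h2
      linarith
    exact himag.elim
      { toFun := fun x => (σ x).re
        map_one' := by simp
        map_mul' := by intro x y; simp [Complex.mul_re, hreal]
        map_zero' := by simp
        map_add' := by intro x y; simp }
  have huniv : (Finset.univ : Finset (K →ₐ[ℚ] ℂ)) = {σ, σ'} := by
    symm
    apply Finset.eq_of_subset_of_card_le (Finset.subset_univ _)
    rw [Finset.card_univ, hcard,
      Finset.card_insert_of_notMem (by simpa using hne), Finset.card_singleton]
  have key : ∀ x : K, ((Algebra.norm ℚ x : ℚ) : ℝ) = ‖σ x‖ ^ 2 := by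
    intro x
    have h1 : (algebraMap ℚ ℂ) (Algebra.norm ℚ x) = ∏ τ : K →ₐ[ℚ] ℂ, τ x :=
      Algebra.norm_eq_prod_embeddings ℚ ℂ x
    rw [huniv, Finset.prod_insert (by simpa using hne), Finset.prod_singleton,
      hσ' x, Complex.mul_conj, ← Complex.sq_norm] at h1
    have h2 : ((Algebra.norm ℚ x : ℚ) : ℂ) = ((‖σ x‖ ^ 2 : ℝ) : ℂ) := by
      rw [← h1]; exact (eq_ratCast (algebraMap ℚ ℂ) _).symm
    exact_mod_cast h2
  -- notation
  set A : ℝ := ‖σ (α : K)‖ with hAdef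
  have hA0 : 0 ≤ A := norm_nonneg _
  have hA2 : 2 ≤ A ^ 2 := by
    have := key (α : K)
    have h2 : ((2 : ℚ) : ℝ) ≤ ((Algebra.norm ℚ (α : K) : ℚ) : ℝ) := by exact_mod_cast hα
    rw [this] at h2; simpa using h2
  have hA1 : 1 < A := by nlinarith
  set b0 : ℝ := ‖σ ((c 0 : K))‖ with hb0def
  have hc0K : ((c 0 : K)) ≠ 0 := fun hx => hc0 (by exact_mod_cast hx)
  have hb0 : 0 < b0 := norm_pos_iff.mpr ((map_ne_zero σ).mpr hc0K)
  set C : ℝ := ∑ i ∈ Finset.range (m + 1), ‖σ ((c (m - i) : K))‖ with hCdef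
  have hC0 : 0 ≤ C := Finset.sum_nonneg fun i _ => norm_nonneg _
  have hb0C : b0 ≤ C := by
    rw [hCdef]
    refine Finset.single_le_sum (f := fun i => ‖σ ((c (m - i) : K))‖)
      (fun i _ => norm_nonneg _) (Finset.self_mem_range_succ m) |>.trans_eq' ?_
    simp [hb0def]
  -- images of γ and π
  have hγC : ∀ k, σ ((γ k : K)) =
      ∑ i ∈ Finset.range (m + 1), σ ((c (m - i) : K)) * σ (α : K) ^ (i * k) := by
    intro k
    rw [hγ k]
    push_cast
    rw [map_sum]
    exact Finset.sum_congr rfl fun i _ => by rw [map_mul, map_pow]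
  have hπC : ∀ k, σ ((π k : K)) = 1 + σ (α : K) ^ ((h - m) * k) * σ ((γ k : K)) := by
    intro k
    rw [hπ k]
    push_cast
    rw [map_add, map_mul, map_pow, map_one]
  -- upper bound on |γ k|
  have hupper : ∀ k, ‖σ ((γ k : K))‖ ≤ C * A ^ (m * k) := by
    intro k
    rw [hγC k]
    calc ‖∑ i ∈ Finset.range (m + 1), σ ((c (m - i) : K)) * σ (α : K) ^ (i * k)‖
        ≤ ∑ i ∈ Finset.range (m + 1),
            ‖σ ((c (m - i) : K)) * σ (α : K) ^ (i * k)‖ :=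
          norm_sum_le _ _
      _ ≤ ∑ i ∈ Finset.range (m + 1), ‖σ ((c (m - i) : K))‖ * A ^ (m * k) := by
          refine Finset.sum_le_sum fun i hi => ?_
          rw [norm_mul, norm_pow]
          exact mul_le_mul_of_nonneg_left
            (pow_le_pow_right₀ (le_of_lt hA1)
              (Nat.mul_le_mul_right k (Nat.lt_succ_iff.mp (Finset.mem_range.mp hi))))
            (norm_nonneg _)
      _ = C * A ^ (m * k) := by rw [← Finset.sum_mul]
  -- lower bound pieces: γ k = rest + c 0 * α^(m*k)
  have hlower : ∀ k, b0 * A ^ (m * k) - C * A ^ (m * k) / A ^ k ≤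
      ‖σ ((γ k : K))‖ := by
    intro k
    have hAk : (0:ℝ) < A ^ k := pow_pos (by linarith) k
    set rest : ℂ := ∑ i ∈ Finset.range m, σ ((c (m - i) : K)) * σ (α : K) ^ (i * k) with hrdef
    have hsplit : σ ((γ k : K)) = rest + σ ((c 0 : K)) * σ (α : K) ^ (m * k) := by
      rw [hγC k, Finset.sum_range_succ, Nat.sub_self]
    have hrest : ‖rest‖ * A ^ k ≤ C * A ^ (m * k) := by
      calc ‖rest‖ * A ^ k
          ≤ (∑ i ∈ Finset.range m,
              ‖σ ((c (m - i) : K)) * σ (α : K) ^ (i * k)‖) * A ^ k :=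
            mul_le_mul_of_nonneg_right (norm_sum_le _ _) (le_of_lt hAk)
        _ = ∑ i ∈ Finset.range m,
              ‖σ ((c (m - i) : K))‖ * A ^ (i * k + k) := by
            rw [Finset.sum_mul]
            exact Finset.sum_congr rfl fun i _ => by
              rw [norm_mul, norm_pow, pow_add]; ring
        _ ≤ ∑ i ∈ Finset.range m, ‖σ ((c (m - i) : K))‖ * A ^ (m * k) := by
            refine Finset.sum_le_sum fun i hi => ?_
            refine mul_le_mul_of_nonneg_left
              (pow_le_pow_right₀ (le_of_lt hA1) ?_) (norm_nonneg _)
            have : i + 1 ≤ m := Finset.mem_range.mp hi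
            nlinarith [this]
        _ ≤ C * A ^ (m * k) := by
            rw [← Finset.sum_mul]
            refine mul_le_mul_of_nonneg_right ?_ (le_of_lt (pow_pos (by linarith) _))
            rw [hCdef, Finset.sum_range_succ]
            exact le_add_of_nonneg_right (norm_nonneg _)
    have h1 : b0 * A ^ (m * k) - ‖rest‖ ≤ ‖σ ((γ k : K))‖ := by
      rw [hsplit]
      have htri := norm_add_le (rest + σ ((c 0 : K)) * σ (α : K) ^ (m * k)) (-rest)
      rw [add_neg_cancel_comm, norm_neg] at htri
      have h2 : ‖σ ((c 0 : K)) * σ (α : K) ^ (m * k)‖ = b0 * A ^ (m * k) := by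
        rw [norm_mul, norm_pow]
      rw [h2] at htri
      linarith
    have h3 : C * A ^ (m * k) / A ^ k ≥ ‖rest‖ := by
      rw [ge_iff_le, le_div_iff₀ hAk]; exact hrest
    linarith
  -- choose N
  set T : ℝ := (2 * C + 8 * C ^ 2 + 4) / b0 with hTdef
  obtain ⟨N, hN⟩ := Filter.eventually_atTop.mp
    ((tendsto_pow_atTop_atTop_of_one_lt hA1).eventually_ge_atTop T)
  refine ⟨N, fun k hk => ?_⟩
  have hT : T ≤ A ^ k := hN k hk
  have hAk : (0:ℝ) < A ^ k := pow_pos (by linarith) k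
  have hAmk : (1:ℝ) ≤ A ^ (m * k) := one_le_pow₀ (le_of_lt hA1)
  -- from T ≤ A^k : C ≤ (b0/2) A^k and (8C²+4) ≤ b0 A^k
  have hTT := (div_le_iff₀ hb0).mp hT
  have hcomm : A ^ k * b0 = b0 * A ^ k := mul_comm _ _
  have hT1 : 2 * C ≤ b0 * A ^ k := by linarith [sq_nonneg C]
  have hT2 : 8 * C ^ 2 + 4 ≤ b0 * A ^ k := by linarith
  set g : ℝ := ‖σ ((γ k : K))‖ with hgdef
  have hg0 : 0 ≤ g := norm_nonneg _
  have hgu : g ≤ C * A ^ (m * k) := hupper k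
  have hgl : b0 / 2 * A ^ (m * k) ≤ g := by
    have h1 := hlower k
    have h2 : C * A ^ (m * k) / A ^ k ≤ b0 / 2 * A ^ (m * k) := by
      rw [div_le_iff₀ hAk]
      have hAmk0 : (0:ℝ) ≤ A ^ (m * k) := by linarith
      nlinarith
    linarith
  set p : ℝ := ‖σ ((π k : K))‖ with hpdef
  have hp0 : 0 ≤ p := norm_nonneg _
  have hpl : A ^ ((h - m) * k) * g - 1 ≤ p := by
    have htri := norm_add_le (1 + σ (α : K) ^ ((h - m) * k) * σ ((γ k : K)))
      (-1)
    rw [add_neg_cancel_comm, norm_neg, norm_one, norm_mul, norm_pow,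
      ← hAdef, ← hgdef] at htri
    have h2 : p = ‖1 + σ (α : K) ^ ((h - m) * k) * σ ((γ k : K))‖ := by
      rw [hpdef, hπC k]
    rw [h2]
    linarith
  -- combine the exponents
  have hhm : m ≤ h := by omega
  have hexp : A ^ ((h - m) * k) * A ^ (m * k) = A ^ (h * k) := by
    rw [← pow_add, ← add_mul, Nat.sub_add_cancel hhm]
  have hexp2 : A ^ (h * k) = A ^ (2 * m * k) * A ^ ((h - 2 * m) * k) := by
    rw [← pow_add, ← add_mul, Nat.add_sub_cancel' (le_of_lt hm)]
  have hexp3 : A ^ (2 * m * k) = (A ^ (m * k)) ^ 2 := by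
    rw [← pow_mul]
    congr 1
    ring
  have hAk' : A ^ k ≤ A ^ ((h - 2 * m) * k) := by
    apply pow_le_pow_right₀ (le_of_lt hA1)
    have : 1 ≤ h - 2 * m := by omega
    nlinarith
  -- main inequality : p > 4 g²
  have hmain : 4 * g ^ 2 < p := by
    have hX : (0:ℝ) < A ^ (m * k) := by linarith
    set X : ℝ := A ^ (m * k) with hXdef
    have hAg : A ^ ((h - m) * k) * g ≥ A ^ ((h - m) * k) * (b0 / 2 * X) := by
      apply mul_le_mul_of_nonneg_left hgl (pow_nonneg hA0 _)
    have h4 : A ^ ((h - m) * k) * (b0 / 2 * X) = b0 / 2 * A ^ (h * k) := by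
      rw [← hexp]; ring
    have h5 : b0 / 2 * A ^ (h * k) ≥ b0 / 2 * (X ^ 2 * A ^ k) := by
      rw [hexp2, hexp3]
      apply mul_le_mul_of_nonneg_left _ (by linarith)
      exact mul_le_mul_of_nonneg_left hAk' (by positivity)
    have h6 : 4 * g ^ 2 ≤ 4 * C ^ 2 * X ^ 2 := by nlinarith
    have h7 : b0 * A ^ k * X ^ 2 ≥ (8 * C ^ 2 + 4) * X ^ 2 := by nlinarith [sq_nonneg X]
    -- so b0/2 * (X² * A^k) ≥ (4C²+2) X² ≥ 4C²X² + 2 ≥ 4g² + 2 > 4g² + 1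
    have h8 : b0 / 2 * (X ^ 2 * A ^ k) ≥ 4 * C ^ 2 * X ^ 2 + 2 := by nlinarith
    linarith [hpl, hAg]
  -- conclude in ℚ via ℝ
  have hFk : ((F k : ℚ) : ℝ) = p ^ 2 := by rw [hF k, key]
  have hNg : ((Algebra.norm ℚ ((γ k : K)) : ℚ) : ℝ) = g ^ 2 := key _
  have final : ((F k : ℚ) : ℝ) > ((16 * (Algebra.norm ℚ ((γ k : K))) ^ 2 : ℚ) : ℝ) := by
    push_cast
    rw [hFk, hNg]
    nlinarith
  exact_mod_cast final
end

section
/- Let K be an imaginary quadratic field in which 2 splits, let σ be the nontrivial ℚ-automorphism of K, and let λ be a prime ideal of O_K above 2, so that 2·O_K = λ·σ(λ) with λ ≠ σ(λ). Suppose λ^3 is principal, generated by α ∈ O_K, and set t = Tr_{K/ℚ}(α). Let c_0, c_1 ∈ O_K satisfy c_1 + c_0 ∉ σ(λ)^3 and c_1 + c_0·t ∉ σ(λ)^3 (equivalently, 1 + c_1 + c_0 and 1 + c_1 + c_0·t are not congruent to 1 modulo σ(λ)^3). For a positive integer k, put π_k = 1 + c_1·α^{2k} + c_0·α^{3k}.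 If π_k is a prime element of O_K, then the positive integer F_k = N_{K/ℚ}(π_k) is a prime number. -/
open NumberField

set_option maxHeartbeats 1000000
set_option synthInstance.maxHeartbeats 400000

private lemma univ_pair_aux (K : Type) [Field K] [NumberField K]
    (hdeg : Module.finrank ℚ K = 2) (τ : K →ₐ[ℚ] K) {a : K} (ha : τ a ≠ a) (ι : K →ₐ[ℚ] ℂ) :
    ι ≠ ι.comp τ ∧ ∀ ψ : K →ₐ[ℚ] ℂ, ψ = ι ∨ ψ = ι.comp τ := by
  classical
  have hne : ι ≠ ι.comp τ := by
    intro h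
    apply ha
    have := congrArg (fun f : K →ₐ[ℚ] ℂ => f a) h
    simp only [AlgHom.comp_apply] at this
    exact (ι.toRingHom.injective this).symm
  refine ⟨hne, ?_⟩
  have hpair : ({ι, ι.comp τ} : Finset (K →ₐ[ℚ] ℂ)) = Finset.univ := by
    apply Finset.eq_univ_of_card
    rw [Finset.card_pair hne, AlgHom.card, hdeg]
  intro ψ
  have : ψ ∈ ({ι, ι.comp τ} : Finset (K →ₐ[ℚ] ℂ)) := hpair ▸ Finset.mem_univ ψ
  simpa using this

private lemma trace_norm_eq_aux (K : Type) [Field K] [NumberField K]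
    (hdeg : Module.finrank ℚ K = 2) (τ : K →ₐ[ℚ] K) {a : K} (ha : τ a ≠ a) (x : K) :
    algebraMap ℚ K (Algebra.trace ℚ K x) = x + τ x ∧
      algebraMap ℚ K (Algebra.norm ℚ x) = x * τ x := by
  classical
  have hpos : Nonempty (K →ₐ[ℚ] ℂ) := by
    apply Fintype.card_pos_iff.mp
    rw [AlgHom.card, hdeg]; norm_num
  obtain ⟨ι⟩ := hpos
  obtain ⟨hne, -⟩ := univ_pair_aux K hdeg τ ha ι
  have hpair : (Finset.univ : Finset (K →ₐ[ℚ] ℂ)) = {ι, ι.comp τ} := by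
    symm
    apply Finset.eq_univ_of_card
    rw [Finset.card_pair hne, AlgHom.card, hdeg]
  constructor
  · apply ι.toRingHom.injective
    have h1 : algebraMap ℚ ℂ (Algebra.trace ℚ K x) = ∑ ψ : K →ₐ[ℚ] ℂ, ψ x :=
      trace_eq_sum_embeddings (E := ℂ)
    rw [hpair, Finset.sum_pair hne] at h1
    calc (ι.toRingHom) (algebraMap ℚ K (Algebra.trace ℚ K x))
        = algebraMap ℚ ℂ (Algebra.trace ℚ K x) := ι.commutes _
      _ = ι x + ι (τ x) := by simpa using h1
      _ = (ι.toRingHom) (x + τ x) := by simp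
  · apply ι.toRingHom.injective
    have h1 : algebraMap ℚ ℂ (Algebra.norm ℚ x) = ∏ ψ : K →ₐ[ℚ] ℂ, ψ x :=
      Algebra.norm_eq_prod_embeddings ℚ ℂ x
    rw [hpair, Finset.prod_pair hne] at h1
    calc (ι.toRingHom) (algebraMap ℚ K (Algebra.norm ℚ x))
        = algebraMap ℚ ℂ (Algebra.norm ℚ x) := ι.commutes _
      _ = ι x * ι (τ x) := by simpa using h1
      _ = (ι.toRingHom) (x * τ x) := by simp

/-- Let `K` be an imaginary quadratic field in which `2` splits, `σ` the nontrivial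
automorphism (of its ring of integers, equivalently the nontrivial `ℚ`-automorphism
of `K`), and `λ` a prime of `𝓞 K` above `2`, so `2·𝓞 K = λ·σ(λ)` with `λ ≠ σ(λ)`.
Suppose `λ³ = (α)`, let `t = Tr_{K/ℚ}(α)`, and let `c₀, c₁ ∈ 𝓞 K` with
`c₁ + c₀ ∉ σ(λ)³` and `c₁ + c₀·t ∉ σ(λ)³`.  If `π_k = 1 + c₁·α^{2k} + c₀·α^{3k}` is a
prime element of `𝓞 K`, then `F_k = N_{K/ℚ}(π_k)` is a prime number. -/
theorem stmt_2 (K : Type) [Field K] [NumberField K]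
    (hdeg : Module.finrank ℚ K = 2) (himag : IsEmpty (K →+* ℝ))
    (σ : 𝓞 K ≃+* 𝓞 K) (hσ : σ ≠ RingEquiv.refl (𝓞 K))
    (lam : Ideal (𝓞 K)) (hlp : lam.IsPrime)
    (hsplit : Ideal.span {(2 : 𝓞 K)} = lam * lam.map (σ : 𝓞 K →+* 𝓞 K))
    (hne : lam ≠ lam.map (σ : 𝓞 K →+* 𝓞 K))
    (α : 𝓞 K) (hα : lam ^ 3 = Ideal.span {α})
    (t : ℤ) (ht : (t : ℚ) = Algebra.trace ℚ K (α : K))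
    (c₀ c₁ : 𝓞 K)
    (hc : c₁ + c₀ ∉ (lam.map (σ : 𝓞 K →+* 𝓞 K)) ^ 3)
    (hct : c₁ + c₀ * (t : 𝓞 K) ∉ (lam.map (σ : 𝓞 K →+* 𝓞 K)) ^ 3)
    (k : ℕ) (hk : 0 < k)
    (hπ : Prime (1 + c₁ * α ^ (2 * k) + c₀ * α ^ (3 * k))) :
    ∃ p : ℕ, p.Prime ∧
      (p : ℚ) = Algebra.norm ℚ (((1 + c₁ * α ^ (2 * k) + c₀ * α ^ (3 * k) : 𝓞 K) : K)) := by
  classical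
  haveI := hlp
  set π : 𝓞 K := 1 + c₁ * α ^ (2 * k) + c₀ * α ^ (3 * k) with hπdef
  set μ : Ideal (𝓞 K) := lam.map (σ : 𝓞 K →+* 𝓞 K) with hμdef
  -- the conjugation on K
  let σ' : K ≃+* K := IsFractionRing.ringEquivOfRingEquiv σ
  have hσ'coe : ∀ x : 𝓞 K, σ' (x : K) = ((σ x : 𝓞 K) : K) := fun x =>
    IsFractionRing.ringEquivOfRingEquiv_algebraMap σ x
  let τ : K →ₐ[ℚ] K := (σ' : K →+* K).toRatAlgHom
  have hτcoe : ∀ x : 𝓞 K, τ (x : K) = ((σ x : 𝓞 K) : K) := hσ'coe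
  obtain ⟨a₀, ha₀⟩ : ∃ a, σ a ≠ a := by
    by_contra h
    push_neg at h
    exact hσ (RingEquiv.ext h)
  have hτa : τ ((a₀ : 𝓞 K) : K) ≠ ((a₀ : 𝓞 K) : K) := by
    rw [hτcoe]
    intro h
    exact ha₀ (RingOfIntegers.coe_injective h)
  have key : ∀ x : K,
      algebraMap ℚ K (Algebra.trace ℚ K x) = x + τ x ∧
      algebraMap ℚ K (Algebra.norm ℚ x) = x * τ x :=
    fun x => trace_norm_eq_aux K hdeg τ hτa x
  -- the integer norm of π
  set n : ℤ := Algebra.norm ℤ π with hn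
  have hnormcast : ((n : ℚ)) = Algebra.norm ℚ (π : K) := Algebra.coe_norm_int π
  have hσπ : (n : 𝓞 K) = π * σ π := by
    apply RingOfIntegers.coe_injective
    have h2 := (key (π : K)).2
    rw [← hnormcast] at h2
    rw [hτcoe] at h2
    calc algebraMap (𝓞 K) K ((n : 𝓞 K)) = algebraMap ℚ K ((n : ℚ)) := by
          push_cast [RingOfIntegers.coe_eq_algebraMap]; simp
      _ = algebraMap (𝓞 K) K (π * σ π) := by
          rw [h2]; push_cast [RingOfIntegers.coe_eq_algebraMap]; simp
  have htK : (t : 𝓞 K) = α + σ α := by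
    apply RingOfIntegers.coe_injective
    have h1 := (key (α : K)).1
    rw [← ht] at h1
    rw [hτcoe] at h1
    calc algebraMap (𝓞 K) K ((t : 𝓞 K)) = algebraMap ℚ K ((t : ℚ)) := by
          push_cast [RingOfIntegers.coe_eq_algebraMap]; simp
      _ = algebraMap (𝓞 K) K (α + σ α) := by
          rw [h1]; push_cast [RingOfIntegers.coe_eq_algebraMap]; simp
  -- nonnegativity of n
  have hpos : Nonempty (K →ₐ[ℚ] ℂ) := by
    apply Fintype.card_pos_iff.mp
    rw [AlgHom.card, hdeg]; norm_num
  obtain ⟨ι⟩ := hpos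
  obtain ⟨hneι, hall⟩ := univ_pair_aux K hdeg τ hτa ι
  have hn0 : 0 ≤ n := by
    let ιc : K →ₐ[ℚ] ℂ := ((starRingEnd ℂ).comp (ι : K →+* ℂ)).toRatAlgHom
    have hιc : ιc ≠ ι := by
      intro h
      have hreal : NumberField.ComplexEmbedding.IsReal (ι : K →+* ℂ) := by
        rw [NumberField.ComplexEmbedding.isReal_iff]
        ext x
        have := congrArg (fun f : K →ₐ[ℚ] ℂ => f x) h
        simpa [ιc] using this
      exact himag.false hreal.embedding
    have hιcτ : ιc = ι.comp τ := by
      rcases hall ιc with h | h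
      · exact absurd h hιc
      · exact h
    have hconj : ∀ x : K, ι (τ x) = (starRingEnd ℂ) (ι x) := by
      intro x
      have := congrArg (fun f : K →ₐ[ℚ] ℂ => f x) hιcτ
      simpa [ιc] using this.symm
    have h2 := (key (π : K)).2
    rw [← hnormcast] at h2
    have hcmplx : ((n : ℚ) : ℂ) = ι ((π : K)) * (starRingEnd ℂ) (ι ((π : K))) := by
      calc ((n : ℚ) : ℂ) = algebraMap ℚ ℂ ((n : ℚ)) := by norm_num
        _ = ι (algebraMap ℚ K ((n : ℚ))) := (ι.commutes _).symm
        _ = ι ((π : K) * τ (π : K)) := by rw [h2]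
        _ = _ := by rw [map_mul, hconj]
    rw [Complex.mul_conj] at hcmplx
    have hre : (n : ℝ) = Complex.normSq (ι (π : K)) := by exact_mod_cast hcmplx
    have := Complex.normSq_nonneg (ι ((π : K)))
    rw [← hre] at this
    exact_mod_cast this
  -- basic ideal facts
  have h2ne : (2 : 𝓞 K) ≠ 0 := two_ne_zero
  have hlam_ne : lam ≠ ⊥ := by
    intro h
    have h2 : (2 : 𝓞 K) ∈ Ideal.span {(2 : 𝓞 K)} := Ideal.mem_span_singleton_self _
    rw [hsplit, h, Ideal.bot_mul] at h2
    exact h2ne (Ideal.mem_bot.mp h2)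
  have hμprime : μ.IsPrime := Ideal.map_isPrime_of_equiv σ
  haveI := hμprime
  have hμne : μ ≠ ⊥ := by
    rw [hμdef]
    intro h
    exact hlam_ne
      ((Ideal.map_eq_bot_iff_of_injective (f := (σ : 𝓞 K →+* 𝓞 K)) σ.injective).mp h)
  have hlam_max : lam.IsMaximal := hlp.isMaximal hlam_ne
  have hμmax : μ.IsMaximal := hμprime.isMaximal hμne
  have hsup : lam ⊔ μ = ⊤ := hlam_max.coprime_of_ne hμmax hne
  have hcop : IsCoprime lam μ := Ideal.isCoprime_iff_sup_eq.mpr hsup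
  -- absolute norms
  have hnormInt : ∀ z : ℤ, Algebra.norm ℤ (algebraMap ℤ (𝓞 K) z) = z ^ 2 := by
    intro z
    rw [Algebra.norm_algebraMap_of_basis (RingOfIntegers.basis K),
      ← Module.finrank_eq_card_chooseBasisIndex, NumberField.RingOfIntegers.rank, hdeg]
  have habs4 : Ideal.absNorm lam * Ideal.absNorm μ = 4 := by
    rw [← _root_.map_mul Ideal.absNorm lam μ, ← hsplit, Ideal.absNorm_span_singleton]
    have h2a : (2 : 𝓞 K) = algebraMap ℤ (𝓞 K) 2 := by norm_num
    rw [h2a, hnormInt]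
    norm_num
  have habsl : Ideal.absNorm lam = 2 ∧ Ideal.absNorm μ = 2 := by
    have h1 : Ideal.absNorm lam ≠ 1 := by
      rw [Ne, Ideal.absNorm_eq_one_iff]; exact hlp.ne_top
    have h2 : Ideal.absNorm μ ≠ 1 := by
      rw [Ne, Ideal.absNorm_eq_one_iff]; exact hμprime.ne_top
    have hle : Ideal.absNorm lam ≤ 4 := Nat.le_of_dvd (by norm_num) ⟨_, habs4.symm⟩
    interval_cases h : Ideal.absNorm lam <;> omega
  -- the residue field of μ has two elements
  have hcard : Nat.card (𝓞 K ⧸ μ) = 2 := by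
    have := habsl.2
    rwa [Ideal.absNorm_apply, Submodule.cardQuot_apply] at this
  have hres : ∀ x : 𝓞 K, x ∈ μ ∨ x - 1 ∈ μ := by
    intro x
    haveI : Finite (𝓞 K ⧸ μ) := (Nat.card_pos_iff.mp (by omega)).2
    haveI := Fintype.ofFinite (𝓞 K ⧸ μ)
    have hft : Fintype.card (𝓞 K ⧸ μ) = 2 := by
      rw [← Nat.card_eq_fintype_card]; exact hcard
    have h01 : (Ideal.Quotient.mk μ x) = 0 ∨ (Ideal.Quotient.mk μ x) = 1 := by
      by_contra hcon
      push_neg at hcon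
      have hne01 : (0 : 𝓞 K ⧸ μ) ≠ 1 := zero_ne_one
      have : ({0, 1, Ideal.Quotient.mk μ x} : Finset (𝓞 K ⧸ μ)).card ≤ 2 := by
        rw [← hft]; exact Finset.card_le_univ _
      rw [Finset.card_insert_of_notMem (by simp [hne01, Ne.symm hcon.1]),
        Finset.card_insert_of_notMem (by simp [Ne.symm hcon.2])] at this
      simp at this
    rcases h01 with h | h
    · exact Or.inl (Ideal.Quotient.eq_zero_iff_mem.mp h)
    · right
      have : Ideal.Quotient.mk μ (x - 1) = 0 := by rw [map_sub, h]; simp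
      exact Ideal.Quotient.eq_zero_iff_mem.mp this
  have h2mem : (2 : 𝓞 K) ∈ μ := by
    have h2 : (2 : 𝓞 K) ∈ lam * μ := hsplit ▸ Ideal.mem_span_singleton_self _
    exact (Ideal.mul_le_right : lam * μ ≤ μ) h2
  -- integers are dense mod powers of μ
  have hstep : ∀ m : ℕ, μ ^ m ≤ Ideal.span {(2 : 𝓞 K) ^ m} ⊔ μ ^ (m + 1) := by
    intro m
    have hsupm : lam ^ m ⊔ μ = ⊤ :=
      Ideal.isCoprime_iff_sup_eq.mp (hcop.pow_left)
    have : μ ^ m = μ ^ m * lam ^ m ⊔ μ ^ m * μ := by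
      rw [← Ideal.mul_sup, hsupm, Ideal.mul_top]
    rw [this]
    apply sup_le_sup
    · rw [← Ideal.span_singleton_pow, hsplit, mul_pow]
      exact le_of_eq (mul_comm _ _)
    · rw [← pow_succ]
  have hsurj : ∀ m : ℕ, ∀ x : 𝓞 K, ∃ a : ℤ, x - (a : 𝓞 K) ∈ μ ^ m := by
    intro m
    induction m with
    | zero => intro x; exact ⟨0, by simp⟩
    | succ m ih =>
      intro x
      obtain ⟨a, ha⟩ := ih x
      have hmem := hstep m ha
      obtain ⟨y, hy, z, hz, hyz⟩ := Submodule.mem_sup.mp hmem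
      obtain ⟨r, hr⟩ := Ideal.mem_span_singleton'.mp hy
      have h2m : (2 : 𝓞 K) ^ m ∈ μ ^ m := Ideal.pow_mem_pow h2mem m
      rcases hres r with h | h
      · refine ⟨a, ?_⟩
        have hy' : y ∈ μ ^ (m + 1) := by
          rw [← hr, pow_succ, mul_comm r]
          exact Ideal.mul_mem_mul h2m h
        have h' := add_mem hy' hz
        rwa [hyz] at h'
      · refine ⟨a + 2 ^ m, ?_⟩
        have hy' : (r - 1) * (2 : 𝓞 K) ^ m ∈ μ ^ (m + 1) := by
          rw [pow_succ, mul_comm (r - 1)]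
          exact Ideal.mul_mem_mul h2m h
        have heq : x - ((a + 2 ^ m : ℤ) : 𝓞 K) = (x - (a : 𝓞 K)) - (2 : 𝓞 K) ^ m := by
          push_cast
          ring
        rw [heq, ← hyz, ← hr]
        have heq2 : r * (2 : 𝓞 K) ^ m + z - (2 : 𝓞 K) ^ m = (r - 1) * (2 : 𝓞 K) ^ m + z := by
          ring
        rw [heq2]
        exact add_mem hy' hz
  -- congruence facts mod μ³
  have halam3 : α ∈ lam ^ 3 := hα ▸ Ideal.mem_span_singleton_self α
  have hσα : σ α ∈ μ ^ 3 := by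
    have h1 : σ α ∈ (lam ^ 3).map (σ : 𝓞 K →+* 𝓞 K) := Ideal.mem_map_of_mem _ halam3
    rwa [Ideal.map_pow] at h1
  have htα : α - (t : 𝓞 K) ∈ μ ^ 3 := by
    have : α - (t : 𝓞 K) = -(σ α) := by rw [htK]; ring
    rw [this]
    exact neg_mem hσα
  have hαnotμ : α ∉ μ := by
    intro h
    have h1 : lam ^ 3 ≤ μ := by
      rw [hα]
      exact (Ideal.span_singleton_le_iff_mem _).mpr h
    have h2 : lam ≤ μ := (Ideal.IsPrime.pow_le_iff (by norm_num)).mp h1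
    exact hne (hlam_max.eq_of_le hμprime.ne_top h2)
  have htodd : ¬ (2 : ℤ) ∣ t := by
    rintro ⟨u, hu⟩
    apply hαnotμ
    have h1 : (t : 𝓞 K) ∈ μ := by
      rw [hu]; push_cast
      exact Ideal.mul_mem_right _ _ h2mem
    have h2 : α - (t : 𝓞 K) ∈ μ := Ideal.pow_le_self (by norm_num) htα
    have : α = (α - (t : 𝓞 K)) + (t : 𝓞 K) := by ring
    rw [this]
    exact add_mem h2 h1
  have h8m : (8 : 𝓞 K) ∈ μ ^ 3 := by
    have h1 : Ideal.span {(2 : 𝓞 K)} ^ 3 ≤ μ ^ 3 := by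
      apply Ideal.pow_right_mono
      rw [hsplit]
      exact Ideal.mul_le_right
    apply h1
    have h82 : (8 : 𝓞 K) = 2 ^ 3 := by norm_num
    rw [Ideal.span_singleton_pow, h82]
    exact Ideal.mem_span_singleton_self _
  have h8 : ∀ z : ℤ, (8 : ℤ) ∣ z → (z : 𝓞 K) ∈ μ ^ 3 := by
    rintro z ⟨w, hw⟩
    rw [hw]; push_cast
    exact Ideal.mul_mem_right _ _ h8m
  have hpowα : ∀ j : ℕ, α ^ j - ((t : 𝓞 K)) ^ j ∈ μ ^ 3 := by
    intro j
    obtain ⟨c, hc'⟩ := sub_dvd_pow_sub_pow α ((t : 𝓞 K)) j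
    rw [hc']
    exact Ideal.mul_mem_right _ _ htα
  have hπt : π - (1 + c₁ * ((t : 𝓞 K)) ^ (2 * k) + c₀ * ((t : 𝓞 K)) ^ (3 * k)) ∈ μ ^ 3 := by
    have e : π - (1 + c₁ * ((t : 𝓞 K)) ^ (2 * k) + c₀ * ((t : 𝓞 K)) ^ (3 * k)) =
        c₁ * (α ^ (2 * k) - ((t : 𝓞 K)) ^ (2 * k)) +
        c₀ * (α ^ (3 * k) - ((t : 𝓞 K)) ^ (3 * k)) := by
      rw [hπdef]; ring
    rw [e]
    exact add_mem (Ideal.mul_mem_left _ _ (hpowα _)) (Ideal.mul_mem_left _ _ (hpowα _))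
  have ht2 : (8 : ℤ) ∣ t ^ 2 - 1 := by
    obtain ⟨m, hm⟩ := Int.not_even_iff_odd.mp (fun he => htodd he.two_dvd)
    obtain ⟨w, hw⟩ := Int.even_mul_succ_self m
    refine ⟨w, ?_⟩
    rw [hm]
    nlinarith [hw]
  have ht2j : ∀ j : ℕ, (8 : ℤ) ∣ t ^ (2 * j) - 1 := by
    intro j
    have h1 : t ^ 2 - 1 ∣ t ^ (2 * j) - 1 := by
      have := sub_dvd_pow_sub_pow (t ^ 2) 1 j
      simpa [pow_mul] using this
    exact ht2.trans h1
  obtain ⟨s, hs1, hs2⟩ : ∃ s : 𝓞 K, c₁ + c₀ * s ∉ μ ^ 3 ∧ ((t : 𝓞 K)) ^ (3 * k) - s ∈ μ ^ 3 := by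
    rcases Nat.even_or_odd k with ⟨e, he⟩ | ⟨e, he⟩
    · refine ⟨1, by simpa using hc, ?_⟩
      have hd : (8 : ℤ) ∣ t ^ (3 * k) - 1 := by
        rw [show 3 * k = 2 * (3 * e) by omega]
        exact ht2j _
      have := h8 _ hd
      push_cast at this
      convert this using 2 <;> push_cast <;> ring
    · refine ⟨(t : 𝓞 K), hct, ?_⟩
      have hd : (8 : ℤ) ∣ t ^ (3 * k) - t := by
        have e1 : t ^ (3 * k) - t = t * (t ^ (2 * (3 * e + 1)) - 1) := by
          rw [show 3 * k = 2 * (3 * e + 1) + 1 by omega]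
          ring
        rw [e1]
        exact (ht2j _).mul_left t
      have := h8 _ hd
      push_cast at this
      convert this using 2 <;> push_cast <;> ring
  have hs2' : ((t : 𝓞 K)) ^ (2 * k) - 1 ∈ μ ^ 3 := by
    have := h8 _ (ht2j k)
    push_cast at this
    convert this using 2 <;> push_cast <;> ring
  have hπ1 : π - (1 + (c₁ + c₀ * s)) ∈ μ ^ 3 := by
    have e : π - (1 + (c₁ + c₀ * s)) =
        (π - (1 + c₁ * ((t : 𝓞 K)) ^ (2 * k) + c₀ * ((t : 𝓞 K)) ^ (3 * k))) +
        c₁ * (((t : 𝓞 K)) ^ (2 * k) - 1) + c₀ * (((t : 𝓞 K)) ^ (3 * k) - s) := by ring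
    rw [e]
    exact add_mem (add_mem hπt (Ideal.mul_mem_left _ _ hs2')) (Ideal.mul_mem_left _ _ hs2)
  have hpi1lam : π - 1 ∈ lam ^ 3 := by
    have e : π - 1 = c₁ * α ^ (2 * k - 1) * α + c₀ * α ^ (3 * k - 1) * α := by
      have h2k : 2 * k = (2 * k - 1) + 1 := by omega
      have h3k : 3 * k = (3 * k - 1) + 1 := by omega
      calc π - 1 = c₁ * α ^ (2 * k) + c₀ * α ^ (3 * k) := by rw [hπdef]; ring
        _ = c₁ * α ^ ((2 * k - 1) + 1) + c₀ * α ^ ((3 * k - 1) + 1) := by rw [← h2k, ← h3k]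
        _ = _ := by rw [pow_succ, pow_succ]; ring
    rw [e]
    exact add_mem (Ideal.mul_mem_left _ _ halam3) (Ideal.mul_mem_left _ _ halam3)
  have hσπ1 : σ π - 1 ∈ μ ^ 3 := by
    have h1 := Ideal.mem_map_of_mem (σ : 𝓞 K →+* 𝓞 K) hpi1lam
    rw [Ideal.map_pow] at h1
    simpa using h1
  have hnπ : (n : 𝓞 K) - π ∈ μ ^ 3 := by
    have e : (n : 𝓞 K) - π = π * (σ π - 1) := by rw [hσπ]; ring
    rw [e]
    exact Ideal.mul_mem_left _ _ hσπ1
  -- n is not 0 or 1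
  have hπ0 : π ≠ 0 := hπ.ne_zero
  have hn0' : n ≠ 0 := by
    intro h
    rw [h] at hσπ
    push_cast at hσπ
    rcases mul_eq_zero.mp hσπ.symm with h' | h'
    · exact hπ0 h'
    · exact hπ0 (by simpa using (map_eq_zero_iff σ σ.injective).mp h')
  have hn1 : n ≠ 1 := by
    intro h
    apply hπ.not_unit
    exact IsUnit.of_mul_eq_one (σ π) (by rw [← hσπ, h]; norm_num)
  have hng : 1 < n.toNat := by omega
  -- find the prime under π
  have hfactor : π ∣ ((n.toNat : ℕ) : 𝓞 K) := by
    refine ⟨σ π, ?_⟩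
    have : ((n.toNat : ℕ) : 𝓞 K) = ((n.toNat : ℤ) : 𝓞 K) := by push_cast; ring
    rw [this, Int.toNat_of_nonneg hn0]
    exact hσπ
  obtain ⟨q, hqmem, hqdvd⟩ : ∃ q ∈ n.toNat.primeFactorsList, π ∣ ((q : ℕ) : 𝓞 K) := by
    have hprod : ((n.toNat.primeFactorsList.map (fun q : ℕ => ((q : ℕ) : 𝓞 K))).prod) =
        ((n.toNat : ℕ) : 𝓞 K) := by
      rw [← Nat.cast_list_prod, Nat.prod_primeFactorsList (by omega)]
    obtain ⟨b, hb, hdvd⟩ := hπ.dvd_prod_iff.mp (by rw [hprod]; exact hfactor)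
    obtain ⟨q, hq, rfl⟩ := List.mem_map.mp hb
    exact ⟨q, hq, hdvd⟩
  have hq : q.Prime := Nat.prime_of_mem_primeFactorsList hqmem
  have hnorm_dvd : n.toNat ∣ q ^ 2 := by
    have h1 : Algebra.norm ℤ π ∣ Algebra.norm ℤ (((q : ℕ) : 𝓞 K)) := map_dvd _ hqdvd
    have h2 : Algebra.norm ℤ (((q : ℕ) : 𝓞 K)) = (q : ℤ) ^ 2 := by
      have hqa : ((q : ℕ) : 𝓞 K) = algebraMap ℤ (𝓞 K) (q : ℤ) := by push_cast; simp
      rw [hqa, hnormInt]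
    rw [h2, ← hn] at h1
    have h3 : (n.toNat : ℤ) ∣ ((q ^ 2 : ℕ) : ℤ) := by
      rw [Int.toNat_of_nonneg hn0]; push_cast; exact h1
    exact_mod_cast h3
  obtain ⟨i, hile, hni⟩ := (Nat.dvd_prime_pow hq).mp hnorm_dvd
  interval_cases i
  · simp at hni; omega
  · refine ⟨q, hq, ?_⟩
    rw [← hnormcast]
    have heq : n = (q : ℤ) := by
      have := hni
      simp at this
      omega
    rw [heq]
    norm_cast
  · exfalso
    have hn4 : n = (q : ℤ) ^ 2 := by
      have : (n.toNat : ℤ) = ((q ^ 2 : ℕ) : ℤ) := by exact_mod_cast hni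
      rw [Int.toNat_of_nonneg hn0] at this
      push_cast at this
      exact this
    by_cases hq2 : q = 2
    · subst hq2
      have hspan : lam * μ ≤ Ideal.span {π} := by
        rw [← hsplit]
        apply Ideal.span_singleton_le_span_singleton.mpr
        simpa using hqdvd
      have hPprime : (Ideal.span {π}).IsPrime := (Ideal.span_singleton_prime hπ0).mpr hπ
      have habsπ : Ideal.absNorm (Ideal.span {π}) = 4 := by
        rw [Ideal.absNorm_span_singleton, ← hn]
        omega
      rcases hPprime.mul_le.mp hspan with h | h
      · have he : lam = Ideal.span {π} := hlam_max.eq_of_le hPprime.ne_top h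
        rw [← he] at habsπ
        omega
      · have he : μ = Ideal.span {π} := hμmax.eq_of_le hPprime.ne_top h
        rw [← he] at habsπ
        omega
    · -- q odd
      have hqodd : ¬ (2 : ℤ) ∣ (q : ℤ) := by
        intro hd
        have : (2 : ℕ) ∣ q := by exact_mod_cast hd
        exact hq2 ((Nat.prime_dvd_prime_iff_eq Nat.prime_two hq).mp this).symm
      have hq8 : (8 : ℤ) ∣ (q : ℤ) ^ 2 - 1 := by
        obtain ⟨m, hm⟩ := Int.not_even_iff_odd.mp (fun he => hqodd he.two_dvd)
        obtain ⟨w, hw⟩ := Int.even_mul_succ_self m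
        refine ⟨w, ?_⟩
        rw [hm]
        nlinarith [hw]
      have hq8' : ((q : ℤ) ^ 2 - 1 : ℤ) = n - 1 := by rw [hn4]
      have hnm1 : (n : 𝓞 K) - 1 ∈ μ ^ 3 := by
        have := h8 _ (hq8' ▸ hq8)
        push_cast at this
        convert this using 2 <;> push_cast <;> ring
      have hπm1 : π - 1 ∈ μ ^ 3 := by
        have e : π - 1 = ((n : 𝓞 K) - 1) - ((n : 𝓞 K) - π) := by ring
        rw [e]
        exact sub_mem hnm1 hnπ
      apply hs1
      have e : c₁ + c₀ * s = (π - 1) - (π - (1 + (c₁ + c₀ * s))) := by ring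
      rw [e]
      exact sub_mem hπm1 hπ1
end

section
/- Let L be a number field in which 2 is not ramified, and let 𝔩 be a prime ideal of O_L above 2. Fix a ∈ L with a ≠ 0. Then for any b, b' ∈ O_L with b ∉ 𝔩, b' ∉ 𝔩, and b ≡ b' (mod 𝔩^3), the equation a·x² + b·y² = z² has a solution (x, y, z) ≠ (0,0,0) in the 𝔩-adic completion L_𝔩 if and only if a·x² + b'·y² = z² has a solution (x, y, z) ≠ (0,0,0) in L_𝔩. (That is, the quadratic Hilbert symbol (a, b / 𝔩) is determined by b modulo 𝔩^3.) -/
open NumberField IsDedekindDomain Filter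
open scoped Multiplicative WithZero

-- generic lemma: in a complete valued field, X^2+X-c has a root when v c < 1
lemma aux_root {K : Type*} [Field K] [vK : Valued K ℤᵐ⁰] [CompleteSpace K]
    (c : K) (hc : Valued.v c ≤ (Multiplicative.ofAdd (-1 : ℤ) : Multiplicative ℤ)) :
    ∃ w : K, w * w + w = c := by
  set V := (Valued.v : Valuation K ℤᵐ⁰) with hV
  have h01 : ((Multiplicative.ofAdd (-1 : ℤ) : Multiplicative ℤ) : ℤᵐ⁰) ≤ 1 := by
    rw [← WithZero.coe_one, WithZero.coe_le_coe, ← ofAdd_zero]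
    exact Multiplicative.ofAdd_le.mpr (by norm_num)
  have hc1 : V c ≤ 1 := le_trans hc h01
  -- the iteration
  let W : ℕ → K := fun n => Nat.rec 0 (fun _ p => c - p * p) n
  have hW0 : W 0 = 0 := rfl
  have hWs : ∀ n, W (n + 1) = c - W n * W n := fun n => rfl
  have h1 : ∀ n, V (W n) ≤ V c := by
    intro n
    induction n with
    | zero => simp [hW0]
    | succ n ih =>
      rw [hWs]
      refine le_trans (Valuation.map_sub _ _ _) (max_le le_rfl ?_)
      rw [map_mul]
      calc V (W n) * V (W n) ≤ V c * V c := mul_le_mul' ih ih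
        _ ≤ V c * 1 := mul_le_mul' le_rfl hc1
        _ = V c := mul_one _
  have h2 : ∀ n, V (W (n + 1) - W n) ≤ V c ^ (n + 1) := by
    intro n
    induction n with
    | zero =>
      have e : W (0+1) - W 0 = c := by show c - (0:K)*0 - 0 = c; ring
      rw [e, pow_one]
    | succ n ih =>
      have e : W (n + 2) - W (n + 1) = (W n - W (n + 1)) * (W n + W (n + 1)) := by
        rw [hWs (n+1), hWs n]; ring
      rw [e, map_mul]
      have hsum : V (W n + W (n + 1)) ≤ V c :=
        le_trans (Valuation.map_add _ _ _) (max_le (h1 n) (h1 (n+1)))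
      have hdiff : V (W n - W (n + 1)) ≤ V c ^ (n + 1) := by
        rwa [← Valuation.map_neg, neg_sub]
      calc V (W n - W (n+1)) * V (W n + W (n+1)) ≤ V c ^ (n+1) * V c :=
            mul_le_mul' hdiff hsum
        _ = V c ^ (n + 2) := (pow_succ _ _).symm
  have h3 : ∀ n m, n ≤ m → V (W m - W n) ≤ V c ^ (n + 1) := by
    intro n m hnm
    induction m with
    | zero =>
      interval_cases n
      simp
    | succ m ih =>
      rcases Nat.lt_or_ge n (m+1) with h | h
      · have hnm' : n ≤ m := Nat.lt_succ_iff.mp h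
        have e : W (m+1) - W n = (W (m+1) - W m) + (W m - W n) := by ring
        rw [e]
        refine le_trans (Valuation.map_add _ _ _) (max_le ?_ (ih hnm'))
        refine le_trans (h2 m) ?_
        calc V c ^ (m+1) = V c ^ (n+1) * V c ^ (m - n) := by
              rw [← pow_add]; congr 1; omega
          _ ≤ V c ^ (n+1) * 1 := mul_le_mul' le_rfl (pow_le_one' hc1 _)
          _ = V c ^ (n+1) := mul_one _
      · have : n = m + 1 := le_antisymm hnm h
        subst this
        simp
  -- powers of V c tend below any unit
  have hpow : ∀ γ : ℤᵐ⁰ˣ, ∃ N : ℕ, ∀ n ≥ N, V c ^ (n+1) < (γ : ℤᵐ⁰) := by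
    intro γ
    obtain ⟨g, hg⟩ := WithZero.ne_zero_iff_exists.mp γ.ne_zero
    refine ⟨(1 - Multiplicative.toAdd g).toNat, fun n hn => ?_⟩
    have hcle : V c ^ (n+1) ≤ ((Multiplicative.ofAdd (-(n+1) : ℤ) : Multiplicative ℤ) : ℤᵐ⁰) := by
      calc V c ^ (n+1) ≤ ((Multiplicative.ofAdd (-1 : ℤ) : Multiplicative ℤ) : ℤᵐ⁰) ^ (n+1) :=
            pow_le_pow_left' hc _
        _ = _ := by
            rw [← WithZero.coe_pow]
            congr 1
            rw [← ofAdd_nsmul]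
            congr 1
            ring
    refine lt_of_le_of_lt hcle ?_
    rw [← hg, WithZero.coe_lt_coe, ← ofAdd_toAdd g, Multiplicative.ofAdd_lt]
    omega
  have hcauchy : CauchySeq W := by
    rw [Filter.HasBasis.cauchySeq_iff (Valued.hasBasis_uniformity K ℤᵐ⁰)]
    intro γ _
    obtain ⟨N, hN⟩ := hpow (Units.mk0 (MonoidWithZeroHom.ValueGroup₀.embedding γ.1) (by
      exact (map_ne_zero_iff _ MonoidWithZeroHom.ValueGroup₀.embedding_injective).mpr γ.ne_zero))
    refine ⟨N, fun m hm n hn => ?_⟩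
    show Valued.v.restrict (W n - W m) < γ.1; rw [Valuation.restrict_lt_iff_lt_embedding]
    rcases le_total m n with h | h
    · exact lt_of_le_of_lt (h3 m n h) (hN m hm)
    · have e : V (W n - W m) = V (W m - W n) := by
        rw [show W n - W m = -(W m - W n) by ring]; exact V.map_neg _
      rw [e]
      exact lt_of_le_of_lt (h3 n m h) (hN n hn)
  obtain ⟨w, hw⟩ := cauchySeq_tendsto_of_complete hcauchy
  refine ⟨w, ?_⟩
  have ht1 : Tendsto (fun n => W (n+1)) atTop (nhds w) := hw.comp (tendsto_add_atTop_nat 1)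
  have ht2 : Tendsto (fun n => c - W n * W n) atTop (nhds (c - w * w)) :=
    tendsto_const_nhds.sub (hw.mul hw)
  have : w = c - w * w := tendsto_nhds_unique ht1 ht2
  linear_combination this

open IsDedekindDomain.HeightOneSpectrum in
lemma aux_main (L : Type) [Field L] [NumberField L]
    (hunram : ∀ w : HeightOneSpectrum (𝓞 L),
      (2 : 𝓞 L) ∈ w.asIdeal → (2 : 𝓞 L) ∉ w.asIdeal ^ 2)
    (v : HeightOneSpectrum (𝓞 L)) (hv : (2 : 𝓞 L) ∈ v.asIdeal)
    (a : L)
    (b b' : 𝓞 L) (hb : b ∉ v.asIdeal) (hb' : b' ∉ v.asIdeal)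
    (hcong : b - b' ∈ v.asIdeal ^ 3) :
    (∃ x y z : v.adicCompletion L, ¬(x = 0 ∧ y = 0 ∧ z = 0) ∧
        algebraMap L (v.adicCompletion L) a * x ^ 2 +
          algebraMap L (v.adicCompletion L) ((b : L)) * y ^ 2 = z ^ 2) →
    (∃ x y z : v.adicCompletion L, ¬(x = 0 ∧ y = 0 ∧ z = 0) ∧
        algebraMap L (v.adicCompletion L) a * x ^ 2 +
          algebraMap L (v.adicCompletion L) ((b' : L)) * y ^ 2 = z ^ 2) := by
  set K := v.adicCompletion L with hK
  set V := (Valued.v : Valuation K ℤᵐ⁰) with hV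
  have hval : ∀ r : 𝓞 L, V (algebraMap L K (r : L)) = v.intValuationDef r := by
    intro r
    have e1 : (algebraMap L K) (r : L) = (((r : L)) : v.adicCompletion L) := rfl
    rw [hV, e1, valuedAdicCompletion_eq_valuation']
    exact valuation_of_algebraMap v r
  -- valuations of b and b'
  have hunit : ∀ r : 𝓞 L, r ∉ v.asIdeal → v.intValuationDef r = 1 := by
    intro r hr
    refine le_antisymm (v.intValuation_le_one r) ?_
    by_contra h
    exact hr (Ideal.dvd_span_singleton.mp
      ((v.intValuation_lt_one_iff_dvd r).mp (lt_of_not_ge h)))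
  set B := algebraMap L K ((b : L)) with hB
  set B' := algebraMap L K ((b' : L)) with hB'
  have hBval : V B = 1 := by rw [hB, hval]; exact hunit b hb
  have hB'val : V B' = 1 := by rw [hB', hval]; exact hunit b' hb'
  have hB0 : B ≠ 0 := by
    intro h; rw [h, map_zero] at hBval; exact zero_ne_one hBval
  have hB'0 : B' ≠ 0 := by
    intro h; rw [h, map_zero] at hB'val; exact zero_ne_one hB'val
  -- valuation of b - b'
  have hsub : V (B - B') ≤ ((Multiplicative.ofAdd (-3 : ℤ) : Multiplicative ℤ) : ℤᵐ⁰) := by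
    have e : B - B' = algebraMap L K (((b - b' : 𝓞 L) : L)) := by
      rw [hB, hB', ← (algebraMap L K).map_sub]
      congr 1
    rw [e, hval]
    have := (v.intValuation_le_pow_iff_dvd (b - b') 3).mpr
      (Ideal.dvd_span_singleton.mpr hcong)
    exact_mod_cast this
  -- valuation of 2
  have h2L : (2 : K) = algebraMap L K (((2 : 𝓞 L) : L)) := by
    have e2 : ((2 : 𝓞 L) : L) = (2 : L) := by
      rw [NumberField.RingOfIntegers.coe_eq_algebraMap]
      exact map_ofNat _ 2
    rw [e2, map_ofNat]
  have h2val : V (2 : K) = ((Multiplicative.ofAdd (-1 : ℤ) : Multiplicative ℤ) : ℤᵐ⁰) := by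
    rw [h2L, hval]
    have hle : v.intValuationDef 2 ≤ ((Multiplicative.ofAdd (-1 : ℤ) : Multiplicative ℤ) : ℤᵐ⁰) := by
      have := (v.intValuation_le_pow_iff_dvd 2 1).mpr
        (by rw [pow_one]; exact Ideal.dvd_span_singleton.mpr hv)
      exact_mod_cast this
    have hnle : ¬ v.intValuationDef 2 ≤
        ((Multiplicative.ofAdd (-2 : ℤ) : Multiplicative ℤ) : ℤᵐ⁰) := by
      intro h
      have := (v.intValuation_le_pow_iff_dvd 2 2).mp (by exact_mod_cast h)
      exact hunram v hv (Ideal.dvd_span_singleton.mp this)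
    have hne : v.intValuationDef 2 ≠ 0 :=
      v.intValuation_ne_zero 2 two_ne_zero
    obtain ⟨m, hm⟩ := WithZero.ne_zero_iff_exists.mp hne
    rw [← hm] at hle hnle ⊢
    rw [WithZero.coe_le_coe] at hle
    rw [WithZero.coe_le_coe] at hnle
    rw [WithZero.coe_inj]
    rw [← ofAdd_toAdd m, Multiplicative.ofAdd_le] at hle
    rw [← ofAdd_toAdd m, Multiplicative.ofAdd_le, not_le] at hnle
    rw [← ofAdd_toAdd m]
    congr 1
    omega
  have h40 : (4 : K) ≠ 0 := by
    have : (4 : K) = 2 * 2 := by norm_num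
    rw [this]
    intro h
    rcases mul_eq_zero.mp h with h | h <;>
      · rw [h, map_zero] at h2val; exact (WithZero.coe_ne_zero h2val.symm)
  -- u = B / B' is ≡ 1 mod 4·(maximal ideal)
  set u := B / B' with hu
  have hu0 : u ≠ 0 := div_ne_zero hB0 hB'0
  set c := (u - 1) / 4 with hc
  have hcval : V c ≤ ((Multiplicative.ofAdd (-1 : ℤ) : Multiplicative ℤ) : ℤᵐ⁰) := by
    have e1 : u - 1 = (B - B') / B' := by
      rw [hu, div_sub_one hB'0]
    have hVu1 : V (u - 1) ≤ ((Multiplicative.ofAdd (-3 : ℤ) : Multiplicative ℤ) : ℤᵐ⁰) := by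
      rw [e1, map_div₀, hB'val, div_one]
      exact hsub
    have h4 : V (4 : K) = ((Multiplicative.ofAdd (-2 : ℤ) : Multiplicative ℤ) : ℤᵐ⁰) := by
      have : (4 : K) = 2 * 2 := by norm_num
      rw [this, map_mul, h2val, ← WithZero.coe_mul, ← ofAdd_add]
      norm_num
    rw [hc, map_div₀, h4, div_eq_mul_inv]
    calc V (u - 1) * (((Multiplicative.ofAdd (-2 : ℤ) : Multiplicative ℤ) : ℤᵐ⁰))⁻¹
        ≤ (((Multiplicative.ofAdd (-3 : ℤ) : Multiplicative ℤ) : ℤᵐ⁰)) *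
          (((Multiplicative.ofAdd (-2 : ℤ) : Multiplicative ℤ) : ℤᵐ⁰))⁻¹ :=
          mul_le_mul_left hVu1 _
      _ = _ := by
          rw [← WithZero.coe_inv, ← WithZero.coe_mul, ← ofAdd_neg, ← ofAdd_add]
          norm_num
  obtain ⟨w, hw⟩ := aux_root c hcval
  set t := 1 + 2 * w with htdef
  have ht2 : t ^ 2 = u := by
    have h4c : (4 : K) * c = u - 1 := by
      rw [hc, mul_comm]; exact div_mul_cancel₀ _ h40
    have : t ^ 2 = 1 + 4 * (w * w + w) := by rw [htdef]; ring
    rw [this, hw, h4c]; ring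
  have hBt : B' * t ^ 2 = B := by
    rw [ht2, hu, mul_comm]; exact div_mul_cancel₀ _ hB'0
  have ht0 : t ≠ 0 := by
    intro h
    rw [h] at ht2
    exact hu0 (by rw [← ht2]; ring)
  rintro ⟨x, y, z, hnz, heq⟩
  refine ⟨x, t * y, z, ?_, ?_⟩
  · rintro ⟨hx, hty, hz⟩
    rcases mul_eq_zero.mp hty with h | h
    · exact ht0 h
    · exact hnz ⟨hx, h, hz⟩
  · linear_combination heq + y ^ 2 * hBt

/-- Let `L` be a number field in which `2` is unramified (every prime above `2` has
ramification index `1`, i.e. `2 ∉ 𝔴²` for every prime `𝔴` containing `2`), and let `𝔩`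
be a prime of `𝓞 L` above `2`.  Fix a nonzero `a ∈ L`.  For `b, b' ∈ 𝓞 L` with
`b, b' ∉ 𝔩` and `b ≡ b' (mod 𝔩³)`, the equation `a·x² + b·y² = z²` has a nontrivial
solution in the completion `L_𝔩` iff `a·x² + b'·y² = z²` does; that is, the quadratic
Hilbert symbol `(a, b / 𝔩)` is determined by `b` mod `𝔩³`. -/
theorem stmt_3 (L : Type) [Field L] [NumberField L]
    (hunram : ∀ w : HeightOneSpectrum (𝓞 L),
      (2 : 𝓞 L) ∈ w.asIdeal → (2 : 𝓞 L) ∉ w.asIdeal ^ 2)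
    (v : HeightOneSpectrum (𝓞 L)) (hv : (2 : 𝓞 L) ∈ v.asIdeal)
    (a : L) (ha : a ≠ 0)
    (b b' : 𝓞 L) (hb : b ∉ v.asIdeal) (hb' : b' ∉ v.asIdeal)
    (hcong : b - b' ∈ v.asIdeal ^ 3) :
    ((∃ x y z : v.adicCompletion L, ¬(x = 0 ∧ y = 0 ∧ z = 0) ∧
        algebraMap L (v.adicCompletion L) a * x ^ 2 +
          algebraMap L (v.adicCompletion L) ((b : L)) * y ^ 2 = z ^ 2) ↔
      (∃ x y z : v.adicCompletion L, ¬(x = 0 ∧ y = 0 ∧ z = 0) ∧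
        algebraMap L (v.adicCompletion L) a * x ^ 2 +
          algebraMap L (v.adicCompletion L) ((b' : L)) * y ^ 2 = z ^ 2)) := by
  have hcong' : b' - b ∈ v.asIdeal ^ 3 := by
    have := (v.asIdeal ^ 3).neg_mem hcong
    simpa using this
  exact ⟨aux_main L hunram v hv a b b' hb hb' hcong,
    aux_main L hunram v hv a b' b hb' hb hcong'⟩
end

section
/- Let L be a number field and 𝔩 a prime ideal of O_L above 2 with ramification index 1 (so ord_𝔩(2) = 1). Let O_𝔩 denote the valuation ring of the 𝔩-adic completion L_𝔩, with maximal ideal 𝔪. Let a ∈ L_𝔩 be nonzero with ord_𝔩(a) ∈ {0, 1}, and let b ∈ O_𝔩 be a unit. Suppose there exist x₀, y₀, z₀ ∈ O_𝔩, not all in 𝔪, such that a·x₀² + b·y₀² − z₀² ∈ 𝔪³. Then the equation a·x² + b·y² = z² has a solution (x, y, z) ≠ (0,0,0) in L_𝔩. -/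
open NumberField IsDedekindDomain

open Multiplicative Filter

local notation "ℤₘ₀" => WithZero (Multiplicative ℤ)


local notation "δ" => ((Multiplicative.ofAdd (-1 : ℤ) : Multiplicative ℤ) : ℤₘ₀)

lemma lt_one_iff_le_delta {γ : ℤₘ₀} : γ < 1 ↔ γ ≤ δ := by
  induction γ using WithZero.recZeroCoe with
  | zero => simp [WithZero.zero_lt_coe]
  | coe g =>
      rw [← WithZero.coe_one, WithZero.coe_lt_coe, WithZero.coe_le_coe,
        show (1 : Multiplicative ℤ) = ofAdd (0:ℤ) from rfl,
        show g = ofAdd (g.toAdd) from rfl, ofAdd_lt, ofAdd_le]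
      omega

lemma eq_delta_of {γ : ℤₘ₀} (h1 : δ^2 < γ) (h2 : γ ≤ δ) : γ = δ := by
  induction γ using WithZero.recZeroCoe with
  | zero => simp at h1
  | coe g =>
      rw [← WithZero.coe_pow, WithZero.coe_lt_coe] at h1
      rw [WithZero.coe_le_coe] at h2
      rw [WithZero.coe_inj]
      have h1' : (-1:ℤ)*2 < g.toAdd := h1
      have h2' : g.toAdd ≤ (-1:ℤ) := h2
      have : g.toAdd = -1 := by omega
      rw [show g = ofAdd (g.toAdd) from rfl, this]

lemma delta_lt_one : (δ : ℤₘ₀) < 1 := lt_one_iff_le_delta.mpr le_rfl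

lemma delta_ne_zero : (δ : ℤₘ₀) ≠ 0 := WithZero.coe_ne_zero

lemma delta_cube_lt_sq : (δ : ℤₘ₀)^3 < δ^2 := by
  rw [← WithZero.coe_pow, ← WithZero.coe_pow, WithZero.coe_lt_coe]
  exact (by norm_num : ((-1:ℤ)*3) < (-1)*2)

lemma delta_pow_eventually_lt (γ : ℤₘ₀ˣ) : ∃ N : ℕ, ∀ n ≥ N, (δ:ℤₘ₀)^(n+1) < γ := by
  obtain ⟨g, hg⟩ := WithZero.ne_zero_iff_exists.mp γ.ne_zero
  refine ⟨(-(g.toAdd)).toNat, fun n hn => ?_⟩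
  rw [← hg, ← WithZero.coe_pow, WithZero.coe_lt_coe]
  have : ((ofAdd (-1:ℤ))^(n+1) : Multiplicative ℤ) = ofAdd (-(n+1):ℤ) := by
    rw [← ofAdd_nsmul]; congr 1; ring
  rw [this, show g = ofAdd (g.toAdd) from rfl, ofAdd_lt]
  omega

section CompleteField
variable {F : Type*} [Field F] [Valued F ℤₘ₀] [CompleteSpace F]

theorem exists_root_quadratic (e : F) (he : Valued.v e < 1) :
    ∃ T : F, T^2 + T = e := by
  classical
  set t : ℕ → F := fun n => Nat.rec 0 (fun _ s => e - s^2) n with ht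
  have ht0 : t 0 = 0 := rfl
  have htS : ∀ n, t (n+1) = e - (t n)^2 := fun n => rfl
  have hle1 : Valued.v e ≤ 1 := he.le
  have hbnd : ∀ n, Valued.v (t n) ≤ Valued.v e := by
    intro n; induction n with
    | zero => simp [ht0]
    | succ n ih =>
        rw [htS, sub_eq_add_neg]
        refine le_trans (Valued.v.map_add _ _) (max_le le_rfl ?_)
        rw [Valuation.map_neg, map_pow]
        calc Valued.v (t n) ^ 2 ≤ Valued.v e ^ 2 := pow_le_pow_left' ih 2
          _ ≤ Valued.v e * 1 := by rw [pow_two]; exact mul_le_mul_right hle1 _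
          _ = Valued.v e := mul_one _
  have hdiff : ∀ n, Valued.v (t (n+1) - t n) ≤ Valued.v e ^ (n+1) := by
    intro n; induction n with
    | zero => rw [htS 0, ht0]; simpa using le_rfl
    | succ n ih =>
        have key : t (n+2) - t (n+1) = -((t (n+1) - t n) * (t (n+1) + t n)) := by
          simp only [htS]; ring
        rw [key, Valuation.map_neg, Valuation.map_mul]
        have h2 : Valued.v (t (n+1) + t n) ≤ Valued.v e :=
          le_trans (Valued.v.map_add _ _) (max_le (hbnd (n+1)) (hbnd n))
        calc Valued.v (t (n+1) - t n) * Valued.v (t (n+1) + t n)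
            ≤ Valued.v e ^ (n+1) * Valued.v e := mul_le_mul' ih h2
          _ = Valued.v e ^ (n+2) := (pow_succ _ (n+1)).symm
  have hdiff2 : ∀ N n, N ≤ n → Valued.v (t n - t N) ≤ Valued.v e ^ (N+1) := by
    intro N n hn
    induction n with
    | zero => interval_cases N; simp
    | succ n ih =>
        rcases Nat.lt_or_ge N (n+1) with h | h
        · have hNn : N ≤ n := Nat.lt_succ_iff.mp h
          have : t (n+1) - t N = (t (n+1) - t n) + (t n - t N) := by ring
          rw [this]
          refine le_trans (Valued.v.map_add _ _) (max_le ?_ (ih hNn))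
          exact le_trans (hdiff n) (pow_le_pow_right_of_le_one' he.le (by omega))
        · have : N = n+1 := le_antisymm hn h
          subst this; simp
  have hvede : Valued.v e ≤ δ := lt_one_iff_le_delta.mp he
  have hcau : CauchySeq t := by
    rw [(Valued.hasBasis_uniformity F ℤₘ₀).cauchySeq_iff]
    intro γ _
    simp only [Set.mem_setOf_eq, Valuation.restrict_lt_iff_lt_embedding]
    obtain ⟨N, hN⟩ := delta_pow_eventually_lt
      (Units.map (MonoidWithZeroHom.ValueGroup₀.embedding (f := (.ofClass (Valued.v : Valuation F ℤₘ₀)))) γ)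
    refine ⟨N, fun m hm n hn => ?_⟩
    have main : ∀ p q, N ≤ p → p ≤ q → Valued.v (t q - t p) <
        MonoidWithZeroHom.ValueGroup₀.embedding γ.1 := by
      intro p q hp hpq
      calc Valued.v (t q - t p) ≤ Valued.v e ^ (p+1) := hdiff2 p q hpq
        _ ≤ (δ:ℤₘ₀) ^ (p+1) := pow_le_pow_left' hvede _
        _ < MonoidWithZeroHom.ValueGroup₀.embedding γ.1 := hN p hp
    rcases le_total m n with h | h
    · exact main m n hm h
    · have := main n m hn h
      rwa [(neg_sub (t n) (t m)).symm, Valuation.map_neg] at this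
  obtain ⟨T, hT⟩ := cauchySeq_tendsto_of_complete hcau
  have h1 : Filter.Tendsto (fun n => t (n+1)) Filter.atTop (nhds T) :=
    hT.comp (Filter.tendsto_add_atTop_nat 1)
  have h2 : Filter.Tendsto (fun n => e - (t n)^2) Filter.atTop (nhds (e - T^2)) :=
    Filter.Tendsto.const_sub e (hT.pow 2)
  have hTeq : T = e - T^2 := tendsto_nhds_unique h1 (by simpa only [htS] using h2)
  exact ⟨T, by linear_combination hTeq⟩

lemma exists_sqrt (w : F) (h4 : Valued.v (4:F) ≠ 0) (h41 : Valued.v (4:F) ≤ 1)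
    (hw : Valued.v (w - 1) < Valued.v (4:F)) : ∃ s : F, s ≠ 0 ∧ s^2 = w := by
  have h4pos : (0:ℤₘ₀) < Valued.v (4:F) := lt_of_le_of_ne (zero_le') (Ne.symm h4)
  have h4ne : (4:F) ≠ 0 := fun h => h4 (by rw [h, map_zero])
  have he : Valued.v ((w-1)/4) < 1 := by
    rw [map_div₀, div_lt_iff₀ h4pos, one_mul]; exact hw
  obtain ⟨T, hT⟩ := exists_root_quadratic ((w-1)/4) he
  refine ⟨1 + 2*T, ?_, ?_⟩
  · have hwne : w ≠ 0 := by
      have hv1 : Valued.v w = 1 := by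
        have : Valued.v ((1:F) + (w-1)) = Valued.v (1:F) :=
          Valued.v.map_add_eq_of_lt_left (by rw [map_one]; exact lt_of_lt_of_le hw h41)
        simpa using this
      intro h; rw [h, map_zero] at hv1; exact zero_ne_one hv1
    intro hs
    apply hwne
    have hsq : (1 + 2*T)^2 = w := by
      have h2 : (1 + 2*T)^2 = 1 + 4*(T^2 + T) := by ring
      rw [h2, hT]; field_simp; ring
    rw [← hsq, hs]; ring
  · have h2 : (1 + 2*T)^2 = 1 + 4*(T^2 + T) := by ring
    rw [h2, hT]; field_simp; ring

end CompleteField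

section Adic
variable (L : Type) [Field L] [NumberField L] (v : HeightOneSpectrum (𝓞 L))

lemma mem_max_iff (r : v.adicCompletionIntegers L) :
    r ∈ IsLocalRing.maximalIdeal (v.adicCompletionIntegers L) ↔
      Valued.v (r : v.adicCompletion L) < 1 := by
  rw [IsLocalRing.mem_maximalIdeal, mem_nonunits_iff]
  constructor
  · intro h
    by_contra hlt
    push_neg at hlt
    have heq1 : Valued.v (r : v.adicCompletion L) = 1 := le_antisymm r.2 hlt
    have hrne : (r : v.adicCompletion L) ≠ 0 := by
      intro h0; rw [h0, map_zero] at heq1; exact zero_ne_one heq1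
    have hinv : ((r : v.adicCompletion L)⁻¹) ∈ v.adicCompletionIntegers L := by
      have : Valued.v ((r : v.adicCompletion L)⁻¹) ≤ 1 := by
        rw [map_inv₀, heq1, inv_one]
      exact this
    exact h (IsUnit.of_mul_eq_one (a := r) ⟨_, hinv⟩ (Subtype.ext (mul_inv_cancel₀ hrne)))
  · intro hlt hunit
    obtain ⟨s, hs⟩ := IsUnit.exists_right_inv hunit
    have h1 : Valued.v (r : v.adicCompletion L) * Valued.v (s : v.adicCompletion L) = 1 := by
      have := congrArg
        (fun x : v.adicCompletionIntegers L => Valued.v (x : v.adicCompletion L)) hs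
      simpa [map_mul] using this
    have : (1:ℤₘ₀) ≤ Valued.v (r : v.adicCompletion L) := by
      calc (1:ℤₘ₀) = _ * _ := h1.symm
        _ ≤ Valued.v (r : v.adicCompletion L) * 1 := mul_le_mul_right s.2 _
        _ = Valued.v (r : v.adicCompletion L) := mul_one _
    exact absurd hlt (not_lt.mpr this)

lemma isUnit_val_one {b : v.adicCompletionIntegers L} (hb : IsUnit b) :
    Valued.v (b : v.adicCompletion L) = 1 := by
  have h1 : b ∉ IsLocalRing.maximalIdeal (v.adicCompletionIntegers L) := fun h =>
    (IsLocalRing.mem_maximalIdeal b).mp h hb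
  exact le_antisymm b.2 (not_lt.mp (fun h => h1 ((mem_max_iff L v b).mpr h)))

lemma val_le_of_mem_pow (n : ℕ) (r : v.adicCompletionIntegers L)
    (hr : r ∈ (IsLocalRing.maximalIdeal (v.adicCompletionIntegers L))^n) :
    Valued.v (r : v.adicCompletion L) ≤ δ^n := by
  induction n generalizing r with
  | zero => rw [pow_zero]; exact r.2
  | succ n ih =>
      rw [pow_succ] at hr
      refine Submodule.mul_induction_on hr ?_ ?_
      · intro m hm p hp
        have hc : ((m*p : v.adicCompletionIntegers L) : v.adicCompletion L)
            = (m : v.adicCompletion L) * (p : v.adicCompletion L) := rfl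
        rw [hc, map_mul, pow_succ]
        exact mul_le_mul' (ih m hm) (lt_one_iff_le_delta.mp ((mem_max_iff L v p).mp hp))
      · intro x y hx hy
        have hc : ((x+y : v.adicCompletionIntegers L) : v.adicCompletion L)
            = (x : v.adicCompletion L) + (y : v.adicCompletion L) := rfl
        rw [hc]
        exact le_trans (Valued.v.map_add _ _) (max_le hx hy)

lemma mem_pow_two_of_le (r : v.adicCompletionIntegers L)
    (h : Valued.v (r : v.adicCompletion L) ≤ δ^2) :
    r ∈ (IsLocalRing.maximalIdeal (v.adicCompletionIntegers L))^2 := by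
  obtain ⟨π, hπ⟩ := v.valuation_exists_uniformizer L
  have hπK : Valued.v ((π : v.adicCompletion L)) = δ := by
    rw [HeightOneSpectrum.valuedAdicCompletion_eq_valuation', hπ]; rfl
  have hπmem : (π : v.adicCompletion L) ∈ v.adicCompletionIntegers L := by
    rw [HeightOneSpectrum.mem_adicCompletionIntegers]
    exact le_of_lt (hπK ▸ delta_lt_one)
  have hπne : (π : v.adicCompletion L) ≠ 0 := by
    intro h0; rw [h0, map_zero] at hπK; exact delta_ne_zero hπK.symm
  have hδ2 : (0:ℤₘ₀) < δ^2 := lt_of_le_of_ne zero_le' (Ne.symm (pow_ne_zero _ delta_ne_zero))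
  have hsle : Valued.v ((r : v.adicCompletion L) / (π : v.adicCompletion L)^2) ≤ 1 := by
    rw [map_div₀, map_pow, hπK, div_le_iff₀ hδ2, one_mul]
    exact h
  set P : v.adicCompletionIntegers L := ⟨(π : v.adicCompletion L), hπmem⟩ with hP
  have hPmem : P ∈ IsLocalRing.maximalIdeal (v.adicCompletionIntegers L) := by
    rw [mem_max_iff]
    exact hπK ▸ delta_lt_one
  have hrfact : r = P * P * ⟨_, hsle⟩ := by
    apply Subtype.ext
    show (r : v.adicCompletion L) = (π : v.adicCompletion L) * (π : v.adicCompletion L) *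
      ((r : v.adicCompletion L) / (π : v.adicCompletion L)^2)
    field_simp
  rw [hrfact, pow_two]
  exact Ideal.mul_mem_right _ _ (Ideal.mul_mem_mul hPmem hPmem)

end Adic

/-- Let `L` be a number field and `𝔩` a prime of `𝓞 L` above `2` with ramification
index `1`, i.e. `ord_𝔩(2) = 1`, expressed by saying that in the valuation ring `O_𝔩` of
the completion `L_𝔩` (with maximal ideal `𝔪`) one has `2 ∈ 𝔪` and `2 ∉ 𝔪²`.  Let
`a ∈ L_𝔩` be nonzero with `ord_𝔩(a) ∈ {0, 1}` (i.e. `a ∈ O_𝔩` and `a ∉ 𝔪²`), and let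
`b ∈ O_𝔩` be a unit.  If there are `x₀, y₀, z₀ ∈ O_𝔩`, not all in `𝔪`, with
`a·x₀² + b·y₀² − z₀² ∈ 𝔪³`, then `a·x² + b·y² = z²` has a nontrivial solution in
`L_𝔩`. -/
theorem stmt_4 (L : Type) [Field L] [NumberField L]
    (v : HeightOneSpectrum (𝓞 L))
    (h2 : (2 : v.adicCompletionIntegers L) ∈
      IsLocalRing.maximalIdeal (v.adicCompletionIntegers L))
    (h2' : (2 : v.adicCompletionIntegers L) ∉
      (IsLocalRing.maximalIdeal (v.adicCompletionIntegers L)) ^ 2)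
    (a : v.adicCompletionIntegers L) (ha : a ≠ 0)
    (ha' : a ∉ (IsLocalRing.maximalIdeal (v.adicCompletionIntegers L)) ^ 2)
    (b : v.adicCompletionIntegers L) (hb : IsUnit b)
    (x₀ y₀ z₀ : v.adicCompletionIntegers L)
    (hxyz : ¬(x₀ ∈ IsLocalRing.maximalIdeal (v.adicCompletionIntegers L) ∧
        y₀ ∈ IsLocalRing.maximalIdeal (v.adicCompletionIntegers L) ∧
        z₀ ∈ IsLocalRing.maximalIdeal (v.adicCompletionIntegers L)))
    (heq : a * x₀ ^ 2 + b * y₀ ^ 2 - z₀ ^ 2 ∈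
      (IsLocalRing.maximalIdeal (v.adicCompletionIntegers L)) ^ 3) :
    ∃ x y z : v.adicCompletion L, ¬(x = 0 ∧ y = 0 ∧ z = 0) ∧
      (a : v.adicCompletion L) * x ^ 2 + (b : v.adicCompletion L) * y ^ 2 = z ^ 2 := by
  have hδ1 := delta_lt_one
  have c2 : (((2 : v.adicCompletionIntegers L) : v.adicCompletion L))
      = (2 : v.adicCompletion L) := rfl
  have hV2 : Valued.v (2 : v.adicCompletion L) = δ := by
    have hle : Valued.v (2 : v.adicCompletion L) ≤ δ := by
      have := (mem_max_iff L v _).mp h2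
      rw [c2] at this
      exact lt_one_iff_le_delta.mp this
    have hgt : ¬ Valued.v (2 : v.adicCompletion L) ≤ δ^2 := fun hcon =>
      h2' (mem_pow_two_of_le L v _ (by rw [c2]; exact hcon))
    exact eq_delta_of (not_le.mp hgt) hle
  have hV4 : Valued.v (4 : v.adicCompletion L) = δ^2 := by
    have h42 : (4 : v.adicCompletion L) = 2*2 := by norm_num
    rw [h42, map_mul, hV2, pow_two]
  have h4ne : Valued.v (4 : v.adicCompletion L) ≠ 0 := by
    rw [hV4]; exact pow_ne_zero _ delta_ne_zero
  have h41 : Valued.v (4 : v.adicCompletion L) ≤ 1 := by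
    rw [hV4]; exact pow_le_one' hδ1.le 2
  have hF : Valued.v ((a : v.adicCompletion L) * (x₀ : v.adicCompletion L)^2
      + (b : v.adicCompletion L) * (y₀ : v.adicCompletion L)^2
      - (z₀ : v.adicCompletion L)^2) ≤ δ^3 := by
    have h := val_le_of_mem_pow L v 3 _ heq
    have hc : ((a * x₀ ^ 2 + b * y₀ ^ 2 - z₀ ^ 2 : v.adicCompletionIntegers L)
        : v.adicCompletion L) = (a : v.adicCompletion L) * (x₀ : v.adicCompletion L)^2
      + (b : v.adicCompletion L) * (y₀ : v.adicCompletion L)^2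
      - (z₀ : v.adicCompletion L)^2 := by push_cast; ring
    rwa [hc] at h
  by_cases hz : z₀ ∈ IsLocalRing.maximalIdeal (v.adicCompletionIntegers L)
  · by_cases hy : y₀ ∈ IsLocalRing.maximalIdeal (v.adicCompletionIntegers L)
    · -- Case 3: contradiction with ha'
      exfalso
      have hx : x₀ ∉ IsLocalRing.maximalIdeal (v.adicCompletionIntegers L) :=
        fun hx => hxyz ⟨hx, hy, hz⟩
      have hVx : Valued.v (x₀ : v.adicCompletion L) = 1 :=
        le_antisymm x₀.2 (not_lt.mp fun h => hx ((mem_max_iff L v x₀).mpr h))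
      have hVy : Valued.v (y₀ : v.adicCompletion L) ≤ δ :=
        lt_one_iff_le_delta.mp ((mem_max_iff L v y₀).mp hy)
      have hVz : Valued.v (z₀ : v.adicCompletion L) ≤ δ :=
        lt_one_iff_le_delta.mp ((mem_max_iff L v z₀).mp hz)
      have hby : Valued.v ((b : v.adicCompletion L) * (y₀ : v.adicCompletion L)^2) ≤ δ^2 := by
        rw [map_mul, map_pow]
        calc Valued.v (b : v.adicCompletion L) * Valued.v (y₀ : v.adicCompletion L)^2
            ≤ 1 * δ^2 := mul_le_mul' b.2 (pow_le_pow_left' hVy 2)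
          _ = δ^2 := one_mul _
      have hz2 : Valued.v ((z₀ : v.adicCompletion L)^2) ≤ δ^2 := by
        rw [map_pow]; exact pow_le_pow_left' hVz 2
      have hδ32 : (δ:ℤₘ₀)^3 ≤ δ^2 := delta_cube_lt_sq.le
      have haval : Valued.v (a : v.adicCompletion L) ≤ δ^2 := by
        have hrw : (a : v.adicCompletion L) * (x₀ : v.adicCompletion L)^2
            = ((a : v.adicCompletion L) * (x₀ : v.adicCompletion L)^2
              + (b : v.adicCompletion L) * (y₀ : v.adicCompletion L)^2
              - (z₀ : v.adicCompletion L)^2)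
              - (b : v.adicCompletion L) * (y₀ : v.adicCompletion L)^2
              + (z₀ : v.adicCompletion L)^2 := by ring
        have h1 : Valued.v ((a : v.adicCompletion L) * (x₀ : v.adicCompletion L)^2) ≤ δ^2 := by
          rw [hrw]
          refine le_trans (Valued.v.map_add _ _) (max_le ?_ hz2)
          refine le_trans (Valuation.map_sub _ _ _) (max_le (le_trans hF hδ32) hby)
        rwa [map_mul, map_pow, hVx, one_pow, mul_one] at h1
      exact ha' (mem_pow_two_of_le L v a haval)
    · -- Case 2: y₀ is a unit
      have hVy : Valued.v (y₀ : v.adicCompletion L) = 1 :=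
        le_antisymm y₀.2 (not_lt.mp fun h => hy ((mem_max_iff L v y₀).mpr h))
      have hVb : Valued.v (b : v.adicCompletion L) = 1 := isUnit_val_one L v hb
      have hVd : Valued.v ((b : v.adicCompletion L) * (y₀ : v.adicCompletion L)^2) = 1 := by
        rw [map_mul, map_pow, hVb, hVy]; simp
      have hdne : (b : v.adicCompletion L) * (y₀ : v.adicCompletion L)^2 ≠ 0 := fun h => by
        rw [h, map_zero] at hVd; exact zero_ne_one hVd
      have hyne : (y₀ : v.adicCompletion L) ≠ 0 := fun h => by
        rw [h, map_zero] at hVy; exact zero_ne_one hVy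
      have hw : Valued.v (((z₀ : v.adicCompletion L)^2
          - (a : v.adicCompletion L) * (x₀ : v.adicCompletion L)^2)
            / ((b : v.adicCompletion L) * (y₀ : v.adicCompletion L)^2) - 1)
          < Valued.v (4 : v.adicCompletion L) := by
        have hkey : ((z₀ : v.adicCompletion L)^2
            - (a : v.adicCompletion L) * (x₀ : v.adicCompletion L)^2)
              / ((b : v.adicCompletion L) * (y₀ : v.adicCompletion L)^2) - 1
            = -((a : v.adicCompletion L) * (x₀ : v.adicCompletion L)^2
              + (b : v.adicCompletion L) * (y₀ : v.adicCompletion L)^2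
              - (z₀ : v.adicCompletion L)^2)
              / ((b : v.adicCompletion L) * (y₀ : v.adicCompletion L)^2) := by
          rw [div_sub_one hdne]
          congr 1
          ring
        rw [hkey, map_div₀, Valuation.map_neg, hVd, div_one]
        exact lt_of_le_of_lt hF (hV4 ▸ delta_cube_lt_sq)
      obtain ⟨s, hs0, hs2⟩ := exists_sqrt _ h4ne h41 hw
      refine ⟨(x₀ : v.adicCompletion L), (y₀ : v.adicCompletion L) * s,
        (z₀ : v.adicCompletion L), ?_, ?_⟩
      · rintro ⟨-, h0, -⟩; exact (mul_ne_zero hyne hs0) h0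
      · have hby : (b : v.adicCompletion L) * ((y₀ : v.adicCompletion L) * s)^2
            = (z₀ : v.adicCompletion L)^2
              - (a : v.adicCompletion L) * (x₀ : v.adicCompletion L)^2 := by
          have h1 : (b : v.adicCompletion L) * ((y₀ : v.adicCompletion L) * s)^2
              = ((b : v.adicCompletion L) * (y₀ : v.adicCompletion L)^2) * s^2 := by ring
          rw [h1, hs2, mul_comm, div_mul_cancel₀ _ hdne]
        linear_combination hby
  · -- Case 1: z₀ is a unit
    have hVz : Valued.v (z₀ : v.adicCompletion L) = 1 :=
      le_antisymm z₀.2 (not_lt.mp fun h => hz ((mem_max_iff L v z₀).mpr h))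
    have hzne : (z₀ : v.adicCompletion L) ≠ 0 := fun h => by
      rw [h, map_zero] at hVz; exact zero_ne_one hVz
    have hw : Valued.v (((a : v.adicCompletion L) * (x₀ : v.adicCompletion L)^2
        + (b : v.adicCompletion L) * (y₀ : v.adicCompletion L)^2)
          / ((z₀ : v.adicCompletion L)^2) - 1)
        < Valued.v (4 : v.adicCompletion L) := by
      have hkey : ((a : v.adicCompletion L) * (x₀ : v.adicCompletion L)^2
          + (b : v.adicCompletion L) * (y₀ : v.adicCompletion L)^2)
            / ((z₀ : v.adicCompletion L)^2) - 1
          = ((a : v.adicCompletion L) * (x₀ : v.adicCompletion L)^2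
            + (b : v.adicCompletion L) * (y₀ : v.adicCompletion L)^2
            - (z₀ : v.adicCompletion L)^2) / ((z₀ : v.adicCompletion L)^2) := by
        rw [div_sub_one (pow_ne_zero 2 hzne)]
      rw [hkey, map_div₀, map_pow, hVz, one_pow, div_one]
      exact lt_of_le_of_lt hF (hV4 ▸ delta_cube_lt_sq)
    obtain ⟨s, hs0, hs2⟩ := exists_sqrt _ h4ne h41 hw
    refine ⟨(x₀ : v.adicCompletion L), (y₀ : v.adicCompletion L),
      (z₀ : v.adicCompletion L) * s, ?_, ?_⟩
    · rintro ⟨-, -, h0⟩; exact (mul_ne_zero hzne hs0) h0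
    · have hz2 : ((z₀ : v.adicCompletion L) * s)^2
          = (a : v.adicCompletion L) * (x₀ : v.adicCompletion L)^2
            + (b : v.adicCompletion L) * (y₀ : v.adicCompletion L)^2 := by
        have h1 : ((z₀ : v.adicCompletion L) * s)^2
            = (z₀ : v.adicCompletion L)^2 * s^2 := by ring
        rw [h1, hs2, mul_comm, div_mul_cancel₀ _ (pow_ne_zero 2 hzne)]
      linear_combination -hz2
end

section
/- Let a : ℕ → ℤ be defined by a(0) = 2, a(1) = 3, a(n+2) = 3·a(n+1) − 8·a(n), and for k ∈ ℕ define F(k) = 1 + 8^{2k} + 8^{3k} − a(2k) − a(3k) + 8^{2k}·a(k). Then for every integer k ≥ 2, F(k) > 16·(1 + a(k) + 8^k)². -/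
/-- `a n = Tr((((3 + √−23)/2))^n)`. -/
def a23 : ℕ → ℤ
  | 0 => 2
  | 1 => 3
  | n + 2 => 3 * a23 (n + 1) - 8 * a23 n

/-- `F k = N(1 − α^{2k} − α^{3k})` for `α = (3 + √−23)/2`. -/
def F23 (k : ℕ) : ℤ :=
  1 + 8 ^ (2 * k) + 8 ^ (3 * k) - a23 (2 * k) - a23 (3 * k) + 8 ^ (2 * k) * a23 k

/-- companion sequence: `α^n = (a23 n + b23 n * √−23)/2`. -/
def b23 : ℕ → ℤ
  | 0 => 0
  | 1 => 1
  | n + 2 => 3 * b23 (n + 1) - 8 * b23 n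

lemma step1 : ∀ n : ℕ, 2 * a23 (n + 1) = 3 * a23 n - 23 * b23 n ∧
    2 * b23 (n + 1) = 3 * b23 n + a23 n := by
  intro n
  induction n using Nat.twoStepInduction with
  | zero => constructor <;> rfl
  | one => constructor <;> rfl
  | more p ih1 ih2 =>
    have ea : a23 (p + 2) = 3 * a23 (p + 1) - 8 * a23 p := rfl
    have eb : b23 (p + 2) = 3 * b23 (p + 1) - 8 * b23 p := rfl
    have ea3 : a23 (p + 2 + 1) = 3 * a23 (p + 2) - 8 * a23 (p + 1) := rfl
    have eb3 : b23 (p + 2 + 1) = 3 * b23 (p + 2) - 8 * b23 (p + 1) := rfl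
    constructor
    · rw [ea3, ea, eb]
      linarith [ih1.1, ih1.2, ih2.1, ih2.2]
    · rw [eb3, ea, eb]
      linarith [ih1.1, ih1.2, ih2.1, ih2.2]

lemma addf (n : ℕ) : ∀ m : ℕ,
    (2 * a23 (m + n) = a23 m * a23 n - 23 * (b23 m * b23 n)) ∧
    (2 * b23 (m + n) = a23 m * b23 n + a23 n * b23 m) := by
  intro m
  induction m using Nat.twoStepInduction with
  | zero => refine ⟨?_, ?_⟩ <;> · show (2 : ℤ) * _ = _; simp [a23, b23]; try ring
  | one =>
    have h := step1 n
    have e : 1 + n = n + 1 := by omega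
    rw [e]
    refine ⟨?_, ?_⟩
    · rw [h.1]; show _ = (3 : ℤ) * _ - 23 * ((1 : ℤ) * _); ring
    · rw [h.2]; show _ = (3 : ℤ) * _ + _ * (1 : ℤ); ring
  | more p ih1 ih2 =>
    have ea : a23 (p + 2) = 3 * a23 (p + 1) - 8 * a23 p := rfl
    have eb : b23 (p + 2) = 3 * b23 (p + 1) - 8 * b23 p := rfl
    have eA : p + 2 + n = p + n + 2 := by omega
    have e1 : p + 1 + n = p + n + 1 := by omega
    have ea2 : a23 (p + n + 2) = 3 * a23 (p + n + 1) - 8 * a23 (p + n) := rfl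
    have eb2 : b23 (p + n + 2) = 3 * b23 (p + n + 1) - 8 * b23 (p + n) := rfl
    rw [e1] at ih2
    constructor
    · rw [eA, ea2, ea, eb]
      linear_combination 3 * ih2.1 - 8 * ih1.1
    · rw [eA, eb2, ea, eb]
      linear_combination 3 * ih2.2 - 8 * ih1.2

lemma norm23 : ∀ n : ℕ, (a23 n ^ 2 + 23 * b23 n ^ 2 = 4 * 8 ^ n) ∧
    (a23 (n + 1) * a23 n + 23 * (b23 (n + 1) * b23 n) = 6 * 8 ^ n) := by
  intro n
  induction n using Nat.twoStepInduction with
  | zero => constructor <;> rfl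
  | one => constructor <;> rfl
  | more p ih1 ih2 =>
    have ea : a23 (p + 2) = 3 * a23 (p + 1) - 8 * a23 p := rfl
    have eb : b23 (p + 2) = 3 * b23 (p + 1) - 8 * b23 p := rfl
    have ea3 : a23 (p + 2 + 1) = 3 * a23 (p + 2) - 8 * a23 (p + 1) := rfl
    have eb3 : b23 (p + 2 + 1) = 3 * b23 (p + 2) - 8 * b23 (p + 1) := rfl
    have e : p + 1 + 1 = p + 2 := rfl
    rw [e] at ih2
    have hP : a23 (p + 2) ^ 2 + 23 * b23 (p + 2) ^ 2 = 4 * 8 ^ (p + 2) := by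
      rw [ea, eb]
      linear_combination 9 * ih2.1 + 64 * ih1.1 - 48 * ih1.2
    refine ⟨hP, ?_⟩
    rw [ea3, eb3]
    linear_combination 3 * hP - 8 * ih2.2

lemma key (A q : ℤ) (hA2 : A ^ 2 ≤ 4 * q) (hq : (64 : ℤ) ≤ q) :
    1 + q ^ 2 + q ^ 3 - (A ^ 2 - 2 * q) - (A ^ 3 - 3 * q * A) + q ^ 2 * A >
      16 * (1 + A + q) ^ 2 := by
  have hqpos : (0 : ℤ) < q := by linarith
  have h16 : (4 * A) ^ 2 ≤ q ^ 2 := by nlinarith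
  have hup : 4 * A ≤ q := by nlinarith [sq_nonneg (4 * A - q), sq_nonneg (4 * A + q)]
  have hlo : -q ≤ 4 * A := by nlinarith [sq_nonneg (4 * A - q), sq_nonneg (4 * A + q)]
  have t4 : 64 * q ^ 2 ≤ q ^ 3 := by nlinarith [sq_nonneg q]
  have t5 : 64 * q ≤ q ^ 2 := by nlinarith
  rcases le_or_gt 0 A with h | h
  · have hc : (0 : ℤ) ≤ q ^ 2 - 29 * q - 32 := by nlinarith
    have t1 : 0 ≤ A * (4 * q - A ^ 2) := mul_nonneg h (by linarith)
    have t2 : 0 ≤ A * (q ^ 2 - 29 * q - 32) := mul_nonneg h hc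
    have t3 : q * (4 * A) ≤ q * q := mul_le_mul_of_nonneg_left hup (le_of_lt hqpos)
    nlinarith [t1, t2, t3, t4, t5]
  · have hm : (0 : ℤ) ≤ -A := by linarith
    have t1 : 0 ≤ -A * A ^ 2 := mul_nonneg hm (sq_nonneg A)
    have t2 : -(4 * A) * q ^ 2 ≤ q * q ^ 2 :=
      mul_le_mul_of_nonneg_right (by linarith) (sq_nonneg q)
    have t3 : 0 ≤ -A * q := mul_nonneg hm (le_of_lt hqpos)
    nlinarith [t1, t2, t3, t4, t5]

theorem stmt_6 : ∀ k : ℕ, 2 ≤ k → F23 k > 16 * (1 + a23 k + 8 ^ k) ^ 2 := by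
  intro k hk
  have hN : a23 k ^ 2 + 23 * b23 k ^ 2 = 4 * 8 ^ k := (norm23 k).1
  have h2a := (addf k k).1
  have h2b := (addf k k).2
  have hb2 : b23 (k + k) = a23 k * b23 k := by linarith
  have ha2 : a23 (k + k) = a23 k ^ 2 - 2 * 8 ^ k := by
    have : 2 * a23 (k + k) = 2 * (a23 k ^ 2 - 2 * 8 ^ k) := by
      linear_combination h2a - hN
    linarith
  have h3a := (addf k (k + k)).1
  rw [ha2, hb2] at h3a
  have ha3 : a23 (k + k + k) = a23 k ^ 3 - 3 * 8 ^ k * a23 k := by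
    have : 2 * a23 (k + k + k) = 2 * (a23 k ^ 3 - 3 * 8 ^ k * a23 k) := by
      linear_combination h3a - a23 k * hN
    linarith
  have hq : (64 : ℤ) ≤ 8 ^ k := by
    calc (64 : ℤ) = 8 ^ 2 := by norm_num
    _ ≤ 8 ^ k := pow_le_pow_right₀ (by norm_num) hk
  have hA2 : a23 k ^ 2 ≤ 4 * 8 ^ k := by nlinarith [sq_nonneg (b23 k)]
  have e2 : a23 (2 * k) = a23 k ^ 2 - 2 * 8 ^ k := by rw [two_mul]; exact ha2
  have e3 : a23 (3 * k) = a23 k ^ 3 - 3 * 8 ^ k * a23 k := by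
    rw [show 3 * k = k + k + k by ring]; exact ha3
  have ep2 : (8 : ℤ) ^ (2 * k) = (8 ^ k) ^ 2 := by rw [mul_comm, pow_mul]
  have ep3 : (8 : ℤ) ^ (3 * k) = (8 ^ k) ^ 3 := by rw [mul_comm, pow_mul]
  have := key (a23 k) (8 ^ k) hA2 hq
  rw [F23, e2, e3, ep2, ep3]
  linarith [this]
end
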